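/- arXiv:2510.11843 — 2 statements merged into one kernel-verified Lean document; each statement's English description precedes it below -/
import Mathlib

section
/- Assume strict feasibility, continuity, and monotonicity. Then the CMFG admits a unique Nash equilibrium mean-field flow: a CMFG Nash equilibrium exists, and if (π¹, L¹) and (π², L²) are both CMFG Nash equilibria, then L¹ = L². -/
open Finset

namespace CMFG

/-- Membership in the probability simplex on a finite type. -/
def IsSimplex {X : Type*} [Fintype X] (f : X → ℝ) : Prop :=
  (∀ x, 0 ≤ f x) ∧ ∑ x, f x = 1

variable {S A : Type*} [Fintype S] [Fintype A]

/-- A (Markov, randomized) policy: `π t s ∈ Δ(A)` for every time `t` and state `s`. -/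
def IsPolicy (π : ℕ → S → A → ℝ) : Prop := ∀ t s, IsSimplex (π t s)

/-- A mean-field flow: `L t ∈ Δ(S × A)` for every time `t`. -/
def IsFlow (L : ℕ → S × A → ℝ) : Prop := ∀ t, IsSimplex (L t)

/-- The transition data is a Markov kernel: `p t s a m ∈ Δ(S)` whenever `m ∈ Δ(S × A)`. -/
def IsKernel (T : ℕ) (p : ℕ → S → A → (S × A → ℝ) → S → ℝ) : Prop :=
  ∀ t ≤ T, ∀ s a m, IsSimplex m → IsSimplex (p t s a m)

/-- The occupation measure `Ψ(π, L)` of a representative agent using policy `π`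
under the mean-field flow `L`. -/
def psi (μ0 : S → ℝ) (p : ℕ → S → A → (S × A → ℝ) → S → ℝ)
    (π : ℕ → S → A → ℝ) (L : ℕ → S × A → ℝ) : ℕ → S × A → ℝ
  | 0 => fun sa => π 0 sa.1 sa.2 * μ0 sa.1
  | t + 1 => fun sa =>
      π (t + 1) sa.1 sa.2 *
        ∑ sa' : S × A, p t sa'.1 sa'.2 (L t) sa.1 * psi μ0 p π L t sa'

/-- The mean-field flow `Ψ(π)` induced by the policy `π` alone. -/
def psiInd (μ0 : S → ℝ) (p : ℕ → S → A → (S × A → ℝ) → S → ℝ)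
    (π : ℕ → S → A → ℝ) : ℕ → S × A → ℝ
  | 0 => fun sa => π 0 sa.1 sa.2 * μ0 sa.1
  | t + 1 => fun sa =>
      π (t + 1) sa.1 sa.2 *
        ∑ sa' : S × A, p t sa'.1 sa'.2 (psiInd μ0 p π t) sa.1 * psiInd μ0 p π t sa'

/-- Expected cumulative reward `V^π(L)` of policy `π` under the mean-field flow `L`. -/
def V (T : ℕ) (μ0 : S → ℝ) (p : ℕ → S → A → (S × A → ℝ) → S → ℝ)
    (r : ℕ → S → A → (S × A → ℝ) → ℝ) (π : ℕ → S → A → ℝ) (L : ℕ → S × A → ℝ) : ℝ :=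
  ∑ t ∈ Finset.range (T + 1), ∑ sa : S × A, r t sa.1 sa.2 (L t) * psi μ0 p π L t sa

/-- Expected cumulative cost `𝒞^π(L) ∈ ℝ^k` of policy `π` under the mean-field flow `L`. -/
def Cost (T k : ℕ) (μ0 : S → ℝ) (p : ℕ → S → A → (S × A → ℝ) → S → ℝ)
    (c : ℕ → S → A → (S × A → ℝ) → Fin k → ℝ) (π : ℕ → S → A → ℝ)
    (L : ℕ → S × A → ℝ) : Fin k → ℝ :=
  fun i => ∑ t ∈ Finset.range (T + 1), ∑ sa : S × A, c t sa.1 sa.2 (L t) i * psi μ0 p π L t sa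

/-- `π` is an optimal policy of the constrained MDP `CMDP(L)` with threshold `γ0`. -/
def IsCMDPOptimal (T k : ℕ) (μ0 : S → ℝ) (p : ℕ → S → A → (S × A → ℝ) → S → ℝ)
    (r : ℕ → S → A → (S × A → ℝ) → ℝ) (c : ℕ → S → A → (S × A → ℝ) → Fin k → ℝ)
    (γ0 : Fin k → ℝ) (π : ℕ → S → A → ℝ) (L : ℕ → S × A → ℝ) : Prop :=
  IsPolicy π ∧ (∀ i, Cost T k μ0 p c π L i ≤ γ0 i) ∧
    ∀ π', IsPolicy π' → (∀ i, Cost T k μ0 p c π' L i ≤ γ0 i) →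
      V T μ0 p r π' L ≤ V T μ0 p r π L

/-- `π` is an optimal policy of the unconstrained MDP `MDP(L)`. -/
def IsMDPOptimal (T : ℕ) (μ0 : S → ℝ) (p : ℕ → S → A → (S × A → ℝ) → S → ℝ)
    (r : ℕ → S → A → (S × A → ℝ) → ℝ) (π : ℕ → S → A → ℝ) (L : ℕ → S × A → ℝ) : Prop :=
  IsPolicy π ∧ ∀ π', IsPolicy π' → V T μ0 p r π' L ≤ V T μ0 p r π L

/-- `(π, L)` is a Nash equilibrium of the constrained mean-field game (Definition 2.1):
optimality for `CMDP(L)` together with the consistency condition `L = Ψ(π)` on `𝒯`. -/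
def IsCMFGNash (T k : ℕ) (μ0 : S → ℝ) (p : ℕ → S → A → (S × A → ℝ) → S → ℝ)
    (r : ℕ → S → A → (S × A → ℝ) → ℝ) (c : ℕ → S → A → (S × A → ℝ) → Fin k → ℝ)
    (γ0 : Fin k → ℝ) (π : ℕ → S → A → ℝ) (L : ℕ → S × A → ℝ) : Prop :=
  IsCMDPOptimal T k μ0 p r c γ0 π L ∧ ∀ t ≤ T, L t = psiInd μ0 p π t

/-- Strict feasibility (Assumption 3.1) with margin `δ`. -/
def StrictFeasible (T k : ℕ) (μ0 : S → ℝ) (p : ℕ → S → A → (S × A → ℝ) → S → ℝ)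
    (c : ℕ → S → A → (S × A → ℝ) → Fin k → ℝ) (γ0 : Fin k → ℝ) (δ : ℝ) : Prop :=
  0 < δ ∧ ∀ L, IsFlow L → ∀ i : Fin k, ∃ π, IsPolicy π ∧
    (∀ j, Cost T k μ0 p c π L j ≤ γ0 j) ∧ Cost T k μ0 p c π L i ≤ γ0 i - δ

/-- Strengthened strict feasibility (Assumption 5.1) with margin `δ`. -/
def StrongFeasible (T k : ℕ) (μ0 : S → ℝ) (p : ℕ → S → A → (S × A → ℝ) → S → ℝ)
    (c : ℕ → S → A → (S × A → ℝ) → Fin k → ℝ) (γ0 : Fin k → ℝ) (δ : ℝ) : Prop :=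
  0 < δ ∧ ∀ L, IsFlow L → ∃ π, IsPolicy π ∧ ∀ i, Cost T k μ0 p c π L i ≤ γ0 i - δ

/-- Continuity (Assumption 3.2): `p`, `r`, `c` are continuous in the mean-field argument. -/
def ContinuousData (T k : ℕ) (p : ℕ → S → A → (S × A → ℝ) → S → ℝ)
    (r : ℕ → S → A → (S × A → ℝ) → ℝ)
    (c : ℕ → S → A → (S × A → ℝ) → Fin k → ℝ) : Prop :=
  (∀ t ≤ T, ∀ s a, ContinuousOn (fun m : S × A → ℝ => p t s a m) {m | IsSimplex m}) ∧
  (∀ t ≤ T, ∀ s a, ContinuousOn (fun m : S × A → ℝ => r t s a m) {m | IsSimplex m}) ∧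
  (∀ t ≤ T, ∀ s a, ContinuousOn (fun m : S × A → ℝ => c t s a m) {m | IsSimplex m})

/-- Boundedness: `0 ≤ r ≤ rmax` and `0 ≤ c ≤ cmax` entrywise on the simplex. -/
def BoundedData (T k : ℕ) (r : ℕ → S → A → (S × A → ℝ) → ℝ)
    (c : ℕ → S → A → (S × A → ℝ) → Fin k → ℝ) (rmax cmax : ℝ) : Prop :=
  ∀ t ≤ T, ∀ s a m, IsSimplex m →
    (0 ≤ r t s a m ∧ r t s a m ≤ rmax) ∧ ∀ i, 0 ≤ c t s a m i ∧ c t s a m i ≤ cmax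

/-- The ℓ¹ norm of a finitely supported real vector. -/
def norm1 {J : Type*} [Fintype J] (v : J → ℝ) : ℝ := ∑ j, |v j|

/-- The ℓ² norm of a finitely supported real vector. -/
noncomputable def norm2 {J : Type*} [Fintype J] (v : J → ℝ) : ℝ :=
  Real.sqrt (∑ j, (v j) ^ 2)

/-- Lipschitz continuity (Assumption 3.3) of `p`, `r`, `c` in the mean-field argument. -/
def LipschitzData (T k : ℕ) (p : ℕ → S → A → (S × A → ℝ) → S → ℝ)
    (r : ℕ → S → A → (S × A → ℝ) → ℝ)
    (c : ℕ → S → A → (S × A → ℝ) → Fin k → ℝ) (Cp Cr Cc : ℝ) : Prop :=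
  0 < Cp ∧ 0 < Cr ∧ 0 < Cc ∧
  ∀ t ≤ T, ∀ m1 m2 : S × A → ℝ, IsSimplex m1 → IsSimplex m2 →
    ((∑ sa : S × A, ∑ s' : S, |p t sa.1 sa.2 m1 s' - p t sa.1 sa.2 m2 s'|) ≤
        Cp * norm1 (fun sa => m1 sa - m2 sa)) ∧
    ((∑ sa : S × A, |r t sa.1 sa.2 m1 - r t sa.1 sa.2 m2|) ≤
        Cr * norm1 (fun sa => m1 sa - m2 sa)) ∧
    ((∑ sa : S × A, ∑ i, |c t sa.1 sa.2 m1 i - c t sa.1 sa.2 m2 i|) ≤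
        Cc * norm1 (fun sa => m1 sa - m2 sa))

/-- Lipschitz continuity of the transition kernels alone. -/
def LipschitzKernel (T : ℕ) (p : ℕ → S → A → (S × A → ℝ) → S → ℝ) (Cp : ℝ) : Prop :=
  0 < Cp ∧ ∀ t ≤ T, ∀ m1 m2 : S × A → ℝ, IsSimplex m1 → IsSimplex m2 →
    (∑ sa : S × A, ∑ s' : S, |p t sa.1 sa.2 m1 s' - p t sa.1 sa.2 m2 s'|) ≤
      Cp * norm1 (fun sa => m1 sa - m2 sa)

/-- The reward vector `r_L ∈ ℝ^{|S||A||𝒯|}`. -/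
def rLvec (T : ℕ) (r : ℕ → S → A → (S × A → ℝ) → ℝ) (L : ℕ → S × A → ℝ) :
    Fin (T + 1) × S × A → ℝ :=
  fun x => r (x.1 : ℕ) x.2.1 x.2.2 (L (x.1 : ℕ))

/-- The cost matrix `c_L ∈ ℝ^{k × |S||A||𝒯|}`. -/
def cLmat (T k : ℕ) (c : ℕ → S → A → (S × A → ℝ) → Fin k → ℝ) (L : ℕ → S × A → ℝ) :
    Fin k → Fin (T + 1) × S × A → ℝ :=
  fun i x => c (x.1 : ℕ) x.2.1 x.2.2 (L (x.1 : ℕ)) i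

/-- The right-hand-side vector `b ∈ ℝ^{|S||𝒯|}`. -/
def bvec (T : ℕ) (μ0 : S → ℝ) : Fin (T + 1) × S → ℝ :=
  fun row => if (row.1 : ℕ) = T then μ0 row.2 else 0

/-- The constraint matrix `A_L ∈ ℝ^{|S||𝒯| × |S||A||𝒯|}`; `A_L d = b` encodes
`Σ_a d_0(s,a) = μ0(s)` and `Σ_a d_{t+1}(s,a) = Σ_{s',a'} p_t(s|s',a',L_t) d_t(s',a')`. -/
def ALmat [DecidableEq S] (T : ℕ) (p : ℕ → S → A → (S × A → ℝ) → S → ℝ)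
    (L : ℕ → S × A → ℝ) : Fin (T + 1) × S → Fin (T + 1) × S × A → ℝ :=
  fun row col =>
    if (row.1 : ℕ) < T then
      (if col.1 = row.1 then p (row.1 : ℕ) col.2.1 col.2.2 (L (row.1 : ℕ)) row.2 else 0) +
        (if (col.1 : ℕ) = (row.1 : ℕ) + 1 ∧ col.2.1 = row.2 then -1 else 0)
    else if (col.1 : ℕ) = 0 ∧ col.2.1 = row.2 then 1 else 0

/-- Matrix–vector product. -/
def mulVec {I J : Type*} [Fintype J] (M : I → J → ℝ) (v : J → ℝ) : I → ℝ :=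
  fun i => ∑ j, M i j * v j

/-- Transposed matrix–vector product `M^⊤ y`. -/
def tmulVec {I J : Type*} [Fintype I] (M : I → J → ℝ) (y : I → ℝ) : J → ℝ :=
  fun j => ∑ i, M i j * y i

/-- Euclidean inner product. -/
def dot {J : Type*} [Fintype J] (u v : J → ℝ) : ℝ := ∑ j, u j * v j

/-- View a vector indexed by `Fin (T+1) × S × A` as a time-indexed family. -/
def toFam (T : ℕ) (d : Fin (T + 1) × S × A → ℝ) : ℕ → S × A → ℝ :=
  fun t sa => if h : t < T + 1 then d (⟨t, h⟩, sa.1, sa.2) else 0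

/-- View a time-indexed family as a vector indexed by `Fin (T+1) × S × A`. -/
def toVec (T : ℕ) (d : ℕ → S × A → ℝ) : Fin (T + 1) × S × A → ℝ :=
  fun x => d (x.1 : ℕ) (x.2.1, x.2.2)

/-- `π ∈ Π(d)`: `π` is a policy inducing the occupation measure `d` wherever
`d` puts positive mass on a state. -/
def InPi (T : ℕ) (d : ℕ → S × A → ℝ) (π : ℕ → S → A → ℝ) : Prop :=
  IsPolicy π ∧ ∀ t ≤ T, ∀ s a, 0 < ∑ a' : A, d t (s, a') →
    π t s a = d t (s, a) / ∑ a' : A, d t (s, a')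

/-- Feasibility for the linear program `LP(L)`. -/
def LPFeasible [DecidableEq S] (T k : ℕ) (μ0 : S → ℝ)
    (p : ℕ → S → A → (S × A → ℝ) → S → ℝ)
    (c : ℕ → S → A → (S × A → ℝ) → Fin k → ℝ) (γ0 : Fin k → ℝ)
    (L : ℕ → S × A → ℝ) (d : Fin (T + 1) × S × A → ℝ) : Prop :=
  mulVec (ALmat T p L) d = bvec T μ0 ∧ (∀ i, dot (cLmat T k c L i) d ≤ γ0 i) ∧ ∀ x, 0 ≤ d x

/-- Optimality for the linear program `LP(L)` (minimizing `-r_L^⊤ d`). -/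
def LPOptimal [DecidableEq S] (T k : ℕ) (μ0 : S → ℝ)
    (p : ℕ → S → A → (S × A → ℝ) → S → ℝ) (r : ℕ → S → A → (S × A → ℝ) → ℝ)
    (c : ℕ → S → A → (S × A → ℝ) → Fin k → ℝ) (γ0 : Fin k → ℝ)
    (L : ℕ → S × A → ℝ) (d : Fin (T + 1) × S × A → ℝ) : Prop :=
  LPFeasible T k μ0 p c γ0 L d ∧
    ∀ d', LPFeasible T k μ0 p c γ0 L d' → dot (rLvec T r L) d' ≤ dot (rLvec T r L) d

/-- The KKT system `𝒦(L)` associated with `LP(L)`. -/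
def KKT [DecidableEq S] (T k : ℕ) (μ0 : S → ℝ)
    (p : ℕ → S → A → (S × A → ℝ) → S → ℝ) (r : ℕ → S → A → (S × A → ℝ) → ℝ)
    (c : ℕ → S → A → (S × A → ℝ) → Fin k → ℝ) (γ0 : Fin k → ℝ) (L : ℕ → S × A → ℝ)
    (d : Fin (T + 1) × S × A → ℝ) (y : Fin (T + 1) × S → ℝ)
    (z : Fin (T + 1) × S × A → ℝ) (lam : Fin k → ℝ) : Prop :=
  (∀ x, -(rLvec T r L x) =
      tmulVec (ALmat T p L) y x + z x - ∑ i, cLmat T k c L i x * lam i) ∧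
  mulVec (ALmat T p L) d = bvec T μ0 ∧
  (∀ i, dot (cLmat T k c L i) d ≤ γ0 i) ∧ (∀ x, 0 ≤ d x) ∧
  (∀ x, 0 ≤ z x) ∧ dot z d = 0 ∧ (∀ i, 0 ≤ lam i) ∧
  (∑ i, lam i * (dot (cLmat T k c L i) d - γ0 i)) = 0

/-- The population-level KKT system `𝒦^p(L)`. -/
def PopKKT [DecidableEq S] (T : ℕ) (μ0 : S → ℝ)
    (p : ℕ → S → A → (S × A → ℝ) → S → ℝ) (r : ℕ → S → A → (S × A → ℝ) → ℝ)
    (L : ℕ → S × A → ℝ) (d : Fin (T + 1) × S × A → ℝ) (y : Fin (T + 1) × S → ℝ)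
    (z : Fin (T + 1) × S × A → ℝ) : Prop :=
  (∀ x, -(rLvec T r L x) = tmulVec (ALmat T p L) y x + z x) ∧
  mulVec (ALmat T p L) d = bvec T μ0 ∧ (∀ x, 0 ≤ d x) ∧ (∀ x, 0 ≤ z x) ∧ dot z d = 0

/-- Bound for the dual variable `y` in CMFOMO. -/
noncomputable def yBound (cardS T : ℕ) (rmax cmax δ : ℝ) : ℝ :=
  (cardS : ℝ) * ((T : ℝ) + 1) * ((T : ℝ) + 2) / 2 * rmax * (1 + ((T : ℝ) + 1) / δ * cmax)

/-- Bound for the dual variable `z` in CMFOMO. -/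
noncomputable def zBound (cardS cardA T : ℕ) (rmax cmax δ : ℝ) : ℝ :=
  (cardS : ℝ) * (cardA : ℝ) * (((T : ℝ) + 1) ^ 2 - ((T : ℝ) + 1) + 2) * rmax *
    (1 + ((T : ℝ) + 1) / δ * cmax)

/-- Bound for the multiplier `λ` in CMFOMO. -/
noncomputable def lamBound (T : ℕ) (rmax δ : ℝ) : ℝ := ((T : ℝ) + 1) * rmax / δ

/-- The feasible region of the CMFOMO optimization problem. -/
noncomputable def CMFOMOFeasible (T k : ℕ) (rmax cmax δ : ℝ) (γ0 : Fin k → ℝ)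
    (Lv : Fin (T + 1) × S × A → ℝ) (y : Fin (T + 1) × S → ℝ)
    (z : Fin (T + 1) × S × A → ℝ) (lam w : Fin k → ℝ) : Prop :=
  (∀ x, 0 ≤ Lv x) ∧ (∀ t : Fin (T + 1), ∑ sa : S × A, Lv (t, sa.1, sa.2) = 1) ∧
  norm1 y ≤ yBound (Fintype.card S) T rmax cmax δ ∧
  (∀ x, 0 ≤ z x) ∧ norm1 z ≤ zBound (Fintype.card S) (Fintype.card A) T rmax cmax δ ∧
  (∀ i, 0 ≤ lam i ∧ lam i ≤ lamBound T rmax δ) ∧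
  (∀ i, 0 ≤ w i ∧ w i ≤ γ0 i)

/-- The CMFOMO objective function. -/
noncomputable def CMFOMOObj [DecidableEq S] (T k : ℕ) (μ0 : S → ℝ)
    (p : ℕ → S → A → (S × A → ℝ) → S → ℝ) (r : ℕ → S → A → (S × A → ℝ) → ℝ)
    (c : ℕ → S → A → (S × A → ℝ) → Fin k → ℝ) (γ0 : Fin k → ℝ)
    (c1 c2 c3 c4 c5 : ℝ) (Lv : Fin (T + 1) × S × A → ℝ) (y : Fin (T + 1) × S → ℝ)
    (z : Fin (T + 1) × S × A → ℝ) (lam w : Fin k → ℝ) : ℝ :=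
  c1 * norm2 (fun x => tmulVec (ALmat T p (toFam T Lv)) y x + z x +
        rLvec T r (toFam T Lv) x - ∑ i, cLmat T k c (toFam T Lv) i x * lam i) +
  c2 * norm2 (fun row => mulVec (ALmat T p (toFam T Lv)) Lv row - bvec T μ0 row) +
  c3 * dot z Lv +
  c4 * norm2 (fun i => γ0 i - dot (cLmat T k c (toFam T Lv) i) Lv - w i) +
  c5 * |∑ i, lam i * (γ0 i - dot (cLmat T k c (toFam T Lv) i) Lv)|

/-- The feasible region of the population-level CMFOMO problem. -/
noncomputable def PopCMFOMOFeasible (T k : ℕ) (rmax : ℝ) (γ0 : Fin k → ℝ)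
    (Lv : Fin (T + 1) × S × A → ℝ) (y : Fin (T + 1) × S → ℝ)
    (z : Fin (T + 1) × S × A → ℝ) (w : Fin k → ℝ) : Prop :=
  (∀ x, 0 ≤ Lv x) ∧ (∀ t : Fin (T + 1), ∑ sa : S × A, Lv (t, sa.1, sa.2) = 1) ∧
  norm1 y ≤ (Fintype.card S : ℝ) * ((T : ℝ) + 1) * ((T : ℝ) + 2) / 2 * rmax ∧
  (∀ x, 0 ≤ z x) ∧
  norm1 z ≤ (Fintype.card S : ℝ) * (Fintype.card A : ℝ) *
      (((T : ℝ) + 1) ^ 2 - ((T : ℝ) + 1) + 2) * rmax ∧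
  (∀ i, 0 ≤ w i ∧ w i ≤ γ0 i)

/-- The population-level CMFOMO objective function. -/
noncomputable def PopCMFOMOObj [DecidableEq S] (T k : ℕ) (μ0 : S → ℝ)
    (p : ℕ → S → A → (S × A → ℝ) → S → ℝ) (r : ℕ → S → A → (S × A → ℝ) → ℝ)
    (cp : ℕ → (S × A → ℝ) → Fin k → ℝ) (γ0 : Fin k → ℝ)
    (c1 c2 c3 c4 : ℝ) (Lv : Fin (T + 1) × S × A → ℝ) (y : Fin (T + 1) × S → ℝ)
    (z : Fin (T + 1) × S × A → ℝ) (w : Fin k → ℝ) : ℝ :=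
  c1 * norm2 (fun x => tmulVec (ALmat T p (toFam T Lv)) y x + z x + rLvec T r (toFam T Lv) x) +
  c2 * norm2 (fun row => mulVec (ALmat T p (toFam T Lv)) Lv row - bvec T μ0 row) +
  c3 * dot z Lv +
  c4 * norm2 (fun i => γ0 i -
    dot (cLmat T k (fun t _ _ m => cp t m) (toFam T Lv) i) Lv - w i)

/-- The optimal value `V*_c(L)` of the constrained MDP `CMDP(L)`. -/
noncomputable def Vstar (T k : ℕ) (μ0 : S → ℝ) (p : ℕ → S → A → (S × A → ℝ) → S → ℝ)
    (r : ℕ → S → A → (S × A → ℝ) → ℝ) (c : ℕ → S → A → (S × A → ℝ) → Fin k → ℝ)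
    (γ0 : Fin k → ℝ) (L : ℕ → S × A → ℝ) : ℝ :=
  sSup {v | ∃ π, IsPolicy π ∧ (∀ i, Cost T k μ0 p c π L i ≤ γ0 i) ∧ v = V T μ0 p r π L}

/-- The optimal value of the unconstrained MDP `MDP(L)`. -/
noncomputable def VstarU (T : ℕ) (μ0 : S → ℝ) (p : ℕ → S → A → (S × A → ℝ) → S → ℝ)
    (r : ℕ → S → A → (S × A → ℝ) → ℝ) (L : ℕ → S × A → ℝ) : ℝ :=
  sSup {v | ∃ π, IsPolicy π ∧ v = V T μ0 p r π L}

/-- The optimality gap `G_opt(π)`. -/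
noncomputable def Gopt (T k : ℕ) (μ0 : S → ℝ) (p : ℕ → S → A → (S × A → ℝ) → S → ℝ)
    (r : ℕ → S → A → (S × A → ℝ) → ℝ) (c : ℕ → S → A → (S × A → ℝ) → Fin k → ℝ)
    (γ0 : Fin k → ℝ) (π : ℕ → S → A → ℝ) : ℝ :=
  Vstar T k μ0 p r c γ0 (psiInd μ0 p π) - V T μ0 p r π (psiInd μ0 p π)

/-- The feasibility gap `G_fea(π)`. -/
noncomputable def Gfea (T k : ℕ) (μ0 : S → ℝ) (p : ℕ → S → A → (S × A → ℝ) → S → ℝ)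
    (c : ℕ → S → A → (S × A → ℝ) → Fin k → ℝ) (γ0 : Fin k → ℝ)
    (π : ℕ → S → A → ℝ) : ℝ :=
  norm2 (fun i : Fin k => min 0 (γ0 i - Cost T k μ0 p c π (psiInd μ0 p π) i))

/-- The population-level optimality gap. -/
noncomputable def GoptPop (T : ℕ) (μ0 : S → ℝ) (p : ℕ → S → A → (S × A → ℝ) → S → ℝ)
    (r : ℕ → S → A → (S × A → ℝ) → ℝ) (π : ℕ → S → A → ℝ) : ℝ :=
  VstarU T μ0 p r (psiInd μ0 p π) - V T μ0 p r π (psiInd μ0 p π)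

/-- The population-level feasibility gap. -/
noncomputable def GfeaPop (T k : ℕ) (μ0 : S → ℝ) (p : ℕ → S → A → (S × A → ℝ) → S → ℝ)
    (cp : ℕ → (S × A → ℝ) → Fin k → ℝ) (γ0 : Fin k → ℝ) (π : ℕ → S → A → ℝ) : ℝ :=
  norm2 (fun i : Fin k =>
    min 0 (γ0 i - ∑ t ∈ Finset.range (T + 1), cp t (psiInd μ0 p π t) i))

section NPlayer

variable [DecidableEq S] [DecidableEq A]

/-- Empirical state-action distribution of `N` players. -/
noncomputable def emp (N : ℕ) (x : Fin N → S × A) : S × A → ℝ :=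
  fun sa => (∑ i, if x i = sa then (1 : ℝ) else 0) / (N : ℝ)

/-- The joint law, at each time `t`, of the state-action profile of the `N` players
under the policy profile `πv`. -/
noncomputable def jointLaw (N : ℕ) (μ0 : S → ℝ) (p : ℕ → S → A → (S × A → ℝ) → S → ℝ)
    (πv : Fin N → ℕ → S → A → ℝ) : ℕ → (Fin N → S × A) → ℝ
  | 0 => fun x => ∏ i, μ0 (x i).1 * πv i 0 (x i).1 (x i).2
  | t + 1 => fun x => ∑ x' : Fin N → S × A, jointLaw N μ0 p πv t x' *
      ∏ i, p t (x' i).1 (x' i).2 (emp N x') (x i).1 * πv i (t + 1) (x i).1 (x i).2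

/-- Expected cumulative reward `V^{(i)}` of player `i` in the `N`-player game. -/
noncomputable def Vplayer (N T : ℕ) (μ0 : S → ℝ) (p : ℕ → S → A → (S × A → ℝ) → S → ℝ)
    (r : ℕ → S → A → (S × A → ℝ) → ℝ) (πv : Fin N → ℕ → S → A → ℝ) (i : Fin N) : ℝ :=
  ∑ t ∈ Finset.range (T + 1), ∑ x : Fin N → S × A,
    jointLaw N μ0 p πv t x * r t (x i).1 (x i).2 (emp N x)

/-- Expected cumulative cost `γ^{(i)}` of player `i` in the `N`-player game. -/
noncomputable def CostPlayer (N T k : ℕ) (μ0 : S → ℝ) (p : ℕ → S → A → (S × A → ℝ) → S → ℝ)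
    (c : ℕ → S → A → (S × A → ℝ) → Fin k → ℝ) (πv : Fin N → ℕ → S → A → ℝ)
    (i : Fin N) : Fin k → ℝ :=
  fun j => ∑ t ∈ Finset.range (T + 1), ∑ x : Fin N → S × A,
    jointLaw N μ0 p πv t x * c t (x i).1 (x i).2 (emp N x) j

/-- Feasibility gap `G_fea^{(i)}` of player `i` in the `N`-player game. -/
noncomputable def GfeaPlayer (N T k : ℕ) (μ0 : S → ℝ)
    (p : ℕ → S → A → (S × A → ℝ) → S → ℝ) (c : ℕ → S → A → (S × A → ℝ) → Fin k → ℝ)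
    (γ0 : Fin k → ℝ) (πv : Fin N → ℕ → S → A → ℝ) (i : Fin N) : ℝ :=
  norm2 (fun j : Fin k => min 0 (γ0 j - CostPlayer N T k μ0 p c πv i j))

/-- `(ε1, ε2)`-Nash equilibrium of the constrained `N`-player game. -/
noncomputable def IsEpsNash (N T k : ℕ) (μ0 : S → ℝ)
    (p : ℕ → S → A → (S × A → ℝ) → S → ℝ) (r : ℕ → S → A → (S × A → ℝ) → ℝ)
    (c : ℕ → S → A → (S × A → ℝ) → Fin k → ℝ) (γ0 : Fin k → ℝ)
    (πv : Fin N → ℕ → S → A → ℝ) (ε1 ε2 : ℝ) : Prop :=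
  ∀ i : Fin N,
    (∀ π', IsPolicy π' →
      GfeaPlayer N T k μ0 p c γ0 (Function.update πv i π') i = 0 →
      Vplayer N T μ0 p r (Function.update πv i π') i ≤ Vplayer N T μ0 p r πv i + ε1) ∧
    GfeaPlayer N T k μ0 p c γ0 πv i ≤ ε2

end NPlayer


section AuxProof

variable {S A : Type*} [Fintype S] [Fintype A]

/-- The uniform distribution on `S × A`. -/
noncomputable def unifSA (S A : Type*) [Fintype S] [Fintype A] : S × A → ℝ :=
  fun _ => (Fintype.card (S × A) : ℝ)⁻¹

lemma unifSA_simplex [Nonempty S] [Nonempty A] : IsSimplex (unifSA S A) := by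
  constructor
  · intro x; unfold unifSA; positivity
  · have h : (Fintype.card (S × A) : ℝ) ≠ 0 := by
      exact_mod_cast Fintype.card_ne_zero
    simp only [unifSA, Finset.sum_const, Finset.card_univ, nsmul_eq_mul]
    exact mul_inv_cancel₀ h

lemma psiInd_simplex (T : ℕ) (μ0 : S → ℝ) (hμ0 : IsSimplex μ0)
    (p : ℕ → S → A → (S × A → ℝ) → S → ℝ) (hp : IsKernel T p)
    (π : ℕ → S → A → ℝ) (hπ : IsPolicy π) :
    ∀ t ≤ T, IsSimplex (psiInd μ0 p π t) := by
  intro t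
  induction t with
  | zero =>
    intro _
    constructor
    · rintro ⟨s, a⟩
      exact mul_nonneg ((hπ 0 s).1 a) (hμ0.1 s)
    · rw [Fintype.sum_prod_type]
      have : ∀ s : S, ∑ a : A, psiInd μ0 p π 0 (s, a) = μ0 s := by
        intro s
        simp only [psiInd]
        rw [← Finset.sum_mul, (hπ 0 s).2, one_mul]
      simp only [this]
      exact hμ0.2
  | succ t ih =>
    intro h
    have ht : t ≤ T := Nat.le_of_succ_le h
    have hsim := ih ht
    have hker : ∀ s a, IsSimplex (p t s a (psiInd μ0 p π t)) :=
      fun s a => hp t ht s a _ hsim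
    constructor
    · rintro ⟨s, a⟩
      simp only [psiInd]
      refine mul_nonneg ((hπ (t+1) s).1 a) (Finset.sum_nonneg fun sa' _ => ?_)
      exact mul_nonneg ((hker sa'.1 sa'.2).1 s) (hsim.1 sa')
    · rw [Fintype.sum_prod_type]
      have h1 : ∀ s : S, ∑ a : A, psiInd μ0 p π (t+1) (s, a) =
          ∑ sa' : S × A, p t sa'.1 sa'.2 (psiInd μ0 p π t) s * psiInd μ0 p π t sa' := by
        intro s
        simp only [psiInd]
        rw [← Finset.sum_mul, (hπ (t+1) s).2, one_mul]
      simp only [h1]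
      rw [Finset.sum_comm]
      have h2 : ∀ sa' : S × A,
          ∑ s : S, p t sa'.1 sa'.2 (psiInd μ0 p π t) s * psiInd μ0 p π t sa' =
            psiInd μ0 p π t sa' := by
        intro sa'
        rw [← Finset.sum_mul, (hker sa'.1 sa'.2).2, one_mul]
      simp only [h2]
      exact hsim.2

lemma psi_eq_psiInd (T : ℕ) (μ0 : S → ℝ) (hμ0 : IsSimplex μ0)
    (p : ℕ → S → A → (S × A → ℝ) → S → ℝ) (hp : IsKernel T p)
    (hp_indep : ∀ t ≤ T, ∀ (s : S) (a : A) (m m' : S × A → ℝ),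
      IsSimplex m → IsSimplex m' → p t s a m = p t s a m')
    (π : ℕ → S → A → ℝ) (hπ : IsPolicy π)
    (L : ℕ → S × A → ℝ) (hL : IsFlow L) :
    ∀ t ≤ T, psi μ0 p π L t = psiInd μ0 p π t := by
  intro t
  induction t with
  | zero => intro _; rfl
  | succ t ih =>
    intro h
    have ht : t ≤ T := Nat.le_of_succ_le h
    funext sa
    simp only [psi, psiInd, ih ht]
    congr 1
    refine Finset.sum_congr rfl fun sa' _ => ?_
    rw [hp_indep t ht sa'.1 sa'.2 (L t) (psiInd μ0 p π t) (hL t)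
      (psiInd_simplex T μ0 hμ0 p hp π hπ t ht)]

end AuxProof
section AuxProof2

variable {S A : Type*} [Fintype S] [Fintype A]

lemma V_eq_range (T : ℕ) (μ0 : S → ℝ) (hμ0 : IsSimplex μ0)
    (p : ℕ → S → A → (S × A → ℝ) → S → ℝ) (hp : IsKernel T p)
    (hp_indep : ∀ t ≤ T, ∀ (s : S) (a : A) (m m' : S × A → ℝ),
      IsSimplex m → IsSimplex m' → p t s a m = p t s a m')
    (r : ℕ → S → A → (S × A → ℝ) → ℝ)
    (π : ℕ → S → A → ℝ) (hπ : IsPolicy π)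
    (L : ℕ → S × A → ℝ) (hL : IsFlow L) :
    V T μ0 p r π L = ∑ t ∈ Finset.range (T + 1), ∑ sa : S × A,
      r t sa.1 sa.2 (L t) * psiInd μ0 p π t sa := by
  unfold V
  refine Finset.sum_congr rfl fun t htm => ?_
  have ht : t ≤ T := Nat.lt_succ_iff.mp (Finset.mem_range.mp htm)
  rw [psi_eq_psiInd T μ0 hμ0 p hp hp_indep π hπ L hL t ht]

lemma cost_eq_range [Nonempty S] [Nonempty A] (T k : ℕ) (μ0 : S → ℝ) (hμ0 : IsSimplex μ0)
    (p : ℕ → S → A → (S × A → ℝ) → S → ℝ) (hp : IsKernel T p)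
    (hp_indep : ∀ t ≤ T, ∀ (s : S) (a : A) (m m' : S × A → ℝ),
      IsSimplex m → IsSimplex m' → p t s a m = p t s a m')
    (c : ℕ → S → A → (S × A → ℝ) → Fin k → ℝ)
    (hc_indep : ∀ t ≤ T, ∀ (s : S) (a : A) (m m' : S × A → ℝ),
      IsSimplex m → IsSimplex m' → c t s a m = c t s a m')
    (π : ℕ → S → A → ℝ) (hπ : IsPolicy π)
    (L : ℕ → S × A → ℝ) (hL : IsFlow L) (i : Fin k) :
    Cost T k μ0 p c π L i = ∑ t ∈ Finset.range (T + 1), ∑ sa : S × A,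
      c t sa.1 sa.2 (unifSA S A) i * psiInd μ0 p π t sa := by
  unfold Cost
  refine Finset.sum_congr rfl fun t htm => ?_
  have ht : t ≤ T := Nat.lt_succ_iff.mp (Finset.mem_range.mp htm)
  rw [psi_eq_psiInd T μ0 hμ0 p hp hp_indep π hπ L hL t ht]
  refine Finset.sum_congr rfl fun sa _ => ?_
  rw [hc_indep t ht sa.1 sa.2 (L t) (unifSA S A) (hL t) unifSA_simplex]

/-- The set of consistency-feasible occupation vectors. -/
def occSet (S A : Type*) [Fintype S] [Fintype A] (T : ℕ) (μ0 : S → ℝ)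
    (q : ℕ → S → A → S → ℝ) : Set (Fin (T + 1) × S × A → ℝ) :=
  {d | (∀ x, 0 ≤ d x) ∧ (∀ s : S, ∑ a : A, d (0, s, a) = μ0 s) ∧
    ∀ (t : Fin T) (s : S), ∑ a : A, d (t.succ, s, a) =
      ∑ sa : S × A, q t sa.1 sa.2 s * d (t.castSucc, sa)}

lemma occSet_convex (T : ℕ) (μ0 : S → ℝ) (q : ℕ → S → A → S → ℝ) :
    Convex ℝ (occSet S A T μ0 q) := by
  rintro d1 ⟨h1n, h10, h1c⟩ d2 ⟨h2n, h20, h2c⟩ a b ha hb hab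
  refine ⟨fun x => ?_, fun s => ?_, fun t s => ?_⟩
  · have : (a • d1 + b • d2) x = a * d1 x + b * d2 x := rfl
    rw [this]
    exact add_nonneg (mul_nonneg ha (h1n x)) (mul_nonneg hb (h2n x))
  · have : ∀ x, (a • d1 + b • d2) x = a * d1 x + b * d2 x := fun _ => rfl
    simp only [this, Finset.sum_add_distrib, ← Finset.mul_sum, h10 s, h20 s]
    rw [← add_mul, hab, one_mul]
  · have hx : ∀ x, (a • d1 + b • d2) x = a * d1 x + b * d2 x := fun _ => rfl
    simp only [hx, Finset.sum_add_distrib]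
    rw [← Finset.mul_sum, ← Finset.mul_sum, h1c t s, h2c t s, Finset.mul_sum, Finset.mul_sum]
    rw [← Finset.sum_add_distrib]
    exact Finset.sum_congr rfl fun sa _ => by ring

lemma occSet_closed (T : ℕ) (μ0 : S → ℝ) (q : ℕ → S → A → S → ℝ) :
    IsClosed (occSet S A T μ0 q) := by
  have h1 : IsClosed {d : Fin (T + 1) × S × A → ℝ | ∀ x, 0 ≤ d x} := by
    rw [Set.setOf_forall]
    exact isClosed_iInter fun x => isClosed_le continuous_const (continuous_apply x)
  have h2 : IsClosed {d : Fin (T + 1) × S × A → ℝ | ∀ s : S, ∑ a : A, d (0, s, a) = μ0 s} := by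
    rw [Set.setOf_forall]
    exact isClosed_iInter fun s => isClosed_eq
      (continuous_finset_sum _ fun a _ => continuous_apply _) continuous_const
  have h3 : IsClosed {d : Fin (T + 1) × S × A → ℝ | ∀ (t : Fin T) (s : S),
      ∑ a : A, d (t.succ, s, a) = ∑ sa : S × A, q t sa.1 sa.2 s * d (t.castSucc, sa)} := by
    rw [Set.setOf_forall]
    refine isClosed_iInter fun t => ?_
    rw [Set.setOf_forall]
    refine isClosed_iInter fun s => isClosed_eq
      (continuous_finset_sum _ fun a _ => continuous_apply _)
      (continuous_finset_sum _ fun sa _ => continuous_const.mul (continuous_apply _))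
  unfold occSet
  rw [Set.setOf_and, Set.setOf_and]
  exact h1.inter (h2.inter h3)
end AuxProof2
section AuxProof3

variable {S A : Type*} [Fintype S] [Fintype A]

lemma occSet_slice (T : ℕ) (μ0 : S → ℝ) (hμ0 : IsSimplex μ0)
    (q : ℕ → S → A → S → ℝ) (hq : ∀ t < T, ∀ s a, IsSimplex (q t s a))
    {d : Fin (T + 1) × S × A → ℝ} (hd : d ∈ occSet S A T μ0 q) :
    ∀ t : Fin (T + 1), IsSimplex (fun sa : S × A => d (t, sa)) := by
  obtain ⟨hn, h0, hc⟩ := hd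
  suffices H : ∀ (n : ℕ) (h : n < T + 1), IsSimplex (fun sa : S × A => d (⟨n, h⟩, sa)) by
    intro t
    have := H t.1 t.isLt
    simpa using this
  intro n
  induction n with
  | zero =>
    intro h
    refine ⟨fun sa => hn _, ?_⟩
    rw [Fintype.sum_prod_type]
    have hz : (⟨0, h⟩ : Fin (T + 1)) = 0 := rfl
    simp only [hz]
    calc ∑ s : S, ∑ a : A, d (0, s, a) = ∑ s : S, μ0 s :=
          Finset.sum_congr rfl fun s _ => h0 s
      _ = 1 := hμ0.2
  | succ n ih =>
    intro h
    have hnT : n < T := Nat.succ_lt_succ_iff.mp h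
    have hn1 : n < T + 1 := Nat.lt_of_lt_of_le hnT (Nat.le_succ T)
    refine ⟨fun sa => hn _, ?_⟩
    rw [Fintype.sum_prod_type]
    have hsucc : (⟨n + 1, h⟩ : Fin (T + 1)) = (⟨n, hnT⟩ : Fin T).succ := rfl
    have hcast : (⟨n, hn1⟩ : Fin (T + 1)) = (⟨n, hnT⟩ : Fin T).castSucc := rfl
    calc ∑ s : S, ∑ a : A, d (⟨n + 1, h⟩, s, a)
        = ∑ s : S, ∑ sa : S × A, q n sa.1 sa.2 s * d ((⟨n, hnT⟩ : Fin T).castSucc, sa) := by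
          refine Finset.sum_congr rfl fun s _ => ?_
          rw [hsucc]; exact hc ⟨n, hnT⟩ s
      _ = ∑ sa : S × A, ∑ s : S, q n sa.1 sa.2 s * d ((⟨n, hnT⟩ : Fin T).castSucc, sa) :=
          Finset.sum_comm
      _ = ∑ sa : S × A, d ((⟨n, hnT⟩ : Fin T).castSucc, sa) := by
          refine Finset.sum_congr rfl fun sa _ => ?_
          rw [← Finset.sum_mul, (hq n hnT sa.1 sa.2).2, one_mul]
      _ = 1 := by
          have := (ih hn1).2
          rw [hcast] at this
          exact this

lemma occSet_compact (T : ℕ) (μ0 : S → ℝ) (hμ0 : IsSimplex μ0)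
    (q : ℕ → S → A → S → ℝ) (hq : ∀ t < T, ∀ s a, IsSimplex (q t s a)) :
    IsCompact (occSet S A T μ0 q) := by
  refine IsCompact.of_isClosed_subset
    (isCompact_univ_pi (s := fun _ => Set.Icc (0:ℝ) 1) fun _ => isCompact_Icc)
    (occSet_closed T μ0 q) ?_
  intro d hd
  rw [Set.mem_univ_pi]
  intro x
  constructor
  · exact hd.1 x
  · have hs := occSet_slice T μ0 hμ0 q hq hd x.1
    calc d x = d (x.1, x.2) := by rw [Prod.mk.eta]
      _ ≤ ∑ sa : S × A, d (x.1, sa) := by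
          refine Finset.single_le_sum (fun sa _ => hd.1 _) (Finset.mem_univ x.2)
      _ = 1 := hs.2

lemma policy_mem_occSet [Nonempty S] [Nonempty A] (T : ℕ) (μ0 : S → ℝ) (hμ0 : IsSimplex μ0)
    (p : ℕ → S → A → (S × A → ℝ) → S → ℝ) (hp : IsKernel T p)
    (hp_indep : ∀ t ≤ T, ∀ (s : S) (a : A) (m m' : S × A → ℝ),
      IsSimplex m → IsSimplex m' → p t s a m = p t s a m')
    (π : ℕ → S → A → ℝ) (hπ : IsPolicy π) :
    (fun x : Fin (T + 1) × S × A => psiInd μ0 p π x.1 x.2) ∈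
      occSet S A T μ0 (fun t s a => p t s a (unifSA S A)) := by
  refine ⟨fun x => ?_, fun s => ?_, fun t s => ?_⟩
  · exact (psiInd_simplex T μ0 hμ0 p hp π hπ x.1 (Nat.lt_succ_iff.mp x.1.isLt)).1 x.2
  · simp only [Fin.val_zero, psiInd]
    rw [← Finset.sum_mul, (hπ 0 s).2, one_mul]
  · have htT : (t : ℕ) ≤ T := Nat.le_of_lt t.isLt
    have hsim := psiInd_simplex T μ0 hμ0 p hp π hπ t htT
    simp only [Fin.val_succ, Fin.coe_castSucc, psiInd]
    rw [← Finset.sum_mul, (hπ ((t : ℕ) + 1) s).2, one_mul]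
    refine Finset.sum_congr rfl fun sa _ => ?_
    rw [hp_indep t htT sa.1 sa.2 (psiInd μ0 p π t) (unifSA S A) hsim unifSA_simplex]

end AuxProof3
section AuxProof4

variable {S A : Type*} [Fintype S] [Fintype A]

open Classical in
lemma exists_policy_of_occSet [Nonempty S] [Nonempty A] (T : ℕ) (μ0 : S → ℝ)
    (hμ0 : IsSimplex μ0)
    (p : ℕ → S → A → (S × A → ℝ) → S → ℝ) (hp : IsKernel T p)
    (hp_indep : ∀ t ≤ T, ∀ (s : S) (a : A) (m m' : S × A → ℝ),
      IsSimplex m → IsSimplex m' → p t s a m = p t s a m')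
    {d : Fin (T + 1) × S × A → ℝ}
    (hd : d ∈ occSet S A T μ0 (fun t s a => p t s a (unifSA S A))) :
    ∃ π : ℕ → S → A → ℝ, IsPolicy π ∧
      ∀ (n : ℕ) (h : n < T + 1), psiInd μ0 p π n = fun sa : S × A => d (⟨n, h⟩, sa) := by
  have hq : ∀ t < T, ∀ (s : S) (a : A), IsSimplex ((fun t s a => p t s a (unifSA S A)) t s a) :=
    fun t ht s a => hp t (Nat.le_of_lt ht) s a _ unifSA_simplex
  have hslice := occSet_slice T μ0 hμ0 _ hq hd
  obtain ⟨hnn, h0, hc⟩ := hd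
  set m : Fin (T + 1) → S → ℝ := fun t s => ∑ a : A, d (t, s, a) with hm
  set π0 : ℕ → S → A → ℝ := fun t s a => if h : t < T + 1 then
      (if 0 < m ⟨t, h⟩ s then d (⟨t, h⟩, s, a) / m ⟨t, h⟩ s else (Fintype.card A : ℝ)⁻¹)
      else (Fintype.card A : ℝ)⁻¹ with hπ0
  refine ⟨π0, ?_, ?_⟩
  · -- IsPolicy
    intro t s
    simp only [hπ0]
    have hunif : IsSimplex (fun _ : A => (Fintype.card A : ℝ)⁻¹) := by
      constructor
      · intro a; positivity
      · have h : (Fintype.card A : ℝ) ≠ 0 := by exact_mod_cast Fintype.card_ne_zero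
        simp only [Finset.sum_const, Finset.card_univ, nsmul_eq_mul]
        exact mul_inv_cancel₀ h
    by_cases h : t < T + 1
    · by_cases hpos : 0 < m ⟨t, h⟩ s
      · constructor
        · intro a
          simp only [dif_pos h, if_pos hpos]
          exact div_nonneg (hnn _) hpos.le
        · simp only [dif_pos h, if_pos hpos]
          rw [← Finset.sum_div]
          exact div_self (ne_of_gt hpos)
      · constructor
        · intro a; simp only [dif_pos h, if_neg hpos]; positivity
        · simp only [dif_pos h, if_neg hpos]; exact hunif.2
    · constructor
      · intro a; simp only [dif_neg h]; positivity
      · simp only [dif_neg h]; exact hunif.2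
  · -- induced flow equals d
    intro n
    induction n with
    | zero =>
      intro h
      funext sa
      obtain ⟨s, a⟩ := sa
      have hμ : m ⟨0, h⟩ s = μ0 s := h0 s
      simp only [psiInd, hπ0, dif_pos h]
      by_cases hpos : 0 < m ⟨0, h⟩ s
      · rw [if_pos hpos, hμ]
        exact div_mul_cancel₀ _ (by rw [← hμ]; exact ne_of_gt hpos)
      · rw [if_neg hpos]
        have hz : μ0 s = 0 := le_antisymm (by rw [← hμ]; exact not_lt.mp hpos) (hμ0.1 s)
        have hdz : d (⟨0, h⟩, s, a) = 0 := by
          have : m ⟨0, h⟩ s = 0 := by rw [hμ, hz]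
          have := (Finset.sum_eq_zero_iff_of_nonneg (fun a' _ => hnn (⟨0, h⟩, s, a'))).mp this
          exact this a (Finset.mem_univ a)
        rw [hz, mul_zero]
        exact hdz.symm
    | succ n ih =>
      intro h
      have hnT : n < T := Nat.succ_lt_succ_iff.mp h
      have hn1 : n < T + 1 := Nat.lt_of_lt_of_le hnT (Nat.le_succ T)
      have hpsi := ih hn1
      have hsimn : IsSimplex (psiInd μ0 p π0 n) := by
        rw [hpsi]; exact hslice ⟨n, hn1⟩
      funext sa
      obtain ⟨s, a⟩ := sa
      have hsum : (∑ sa' : S × A, p n sa'.1 sa'.2 (psiInd μ0 p π0 n) s *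
          psiInd μ0 p π0 n sa') = m ⟨n + 1, h⟩ s := by
        have heq : ∀ sa' : S × A, p n sa'.1 sa'.2 (psiInd μ0 p π0 n) s *
            psiInd μ0 p π0 n sa' = p n sa'.1 sa'.2 (unifSA S A) s * d (⟨n, hn1⟩, sa') := by
          intro sa'
          rw [hpsi, hp_indep n (Nat.le_of_lt hnT) sa'.1 sa'.2 _ (unifSA S A)
            (by rw [← hpsi]; exact hsimn) unifSA_simplex]
        rw [Finset.sum_congr rfl fun sa' _ => heq sa']
        have := hc ⟨n, hnT⟩ s
        have hsucc : (⟨n, hnT⟩ : Fin T).succ = (⟨n + 1, h⟩ : Fin (T + 1)) := rfl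
        have hcast : (⟨n, hnT⟩ : Fin T).castSucc = (⟨n, hn1⟩ : Fin (T + 1)) := rfl
        rw [hsucc, hcast] at this
        simp only [Fin.val_mk] at this ⊢
        exact this.symm
      simp only [psiInd, hsum]
      simp only [hπ0, dif_pos h]
      by_cases hpos : 0 < m ⟨n + 1, h⟩ s
      · rw [if_pos hpos, div_mul_cancel₀ _ (ne_of_gt hpos)]
      · rw [if_neg hpos]
        have hmz : m ⟨n + 1, h⟩ s = 0 :=
          le_antisymm (not_lt.mp hpos) (Finset.sum_nonneg fun a' _ => hnn _)
        have hdz : d (⟨n + 1, h⟩, s, a) = 0 := by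
          have := (Finset.sum_eq_zero_iff_of_nonneg
            (fun a' _ => hnn (⟨n + 1, h⟩, s, a'))).mp hmz
          exact this a (Finset.mem_univ a)
        rw [hmz, mul_zero, hdz]

end AuxProof4
section MintyVI

open Filter Topology

/-- Existence of a solution to a variational inequality for a continuous monotone
(decreasing) map on a nonempty compact convex set, via Minty's trick, the finite
intersection property and Hahn–Banach separation. -/
lemma exists_vi_solution {ι : Type*} [Fintype ι] (F : Set (ι → ℝ)) (hFne : F.Nonempty)
    (hFconv : Convex ℝ F) (hFcomp : IsCompact F)
    (R : (ι → ℝ) → ι → ℝ)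
    (hRcont : ∀ w : ι → ℝ, ContinuousOn (fun d => ∑ x, R d x * w x) F)
    (hRmono : ∀ d1 ∈ F, ∀ d2 ∈ F, ∑ x, (R d1 x - R d2 x) * (d1 x - d2 x) ≤ 0) :
    ∃ e ∈ F, ∀ d ∈ F, ∑ x, R e x * d x ≤ ∑ x, R e x * e x := by
  classical
  -- Step 1: a Minty solution exists.
  have hminty : ∃ e ∈ F, ∀ d ∈ F, ∑ x, R d x * d x ≤ ∑ x, R d x * e x := by
    by_contra hcon
    push_neg at hcon
    set Z : F → Set (ι → ℝ) :=
      fun D => {e | ∑ x, R D.1 x * D.1 x ≤ ∑ x, R D.1 x * e x} with hZ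
    have hZc : ∀ D : F, IsClosed (Z D) := fun D =>
      isClosed_le continuous_const
        (continuous_finset_sum _ fun x _ => continuous_const.mul (continuous_apply x))
    have hempty : F ∩ ⋂ D : F, Z D = ∅ := by
      rw [Set.eq_empty_iff_forall_notMem]
      rintro e ⟨heF, heZ⟩
      rw [Set.mem_iInter] at heZ
      obtain ⟨d, hdF, hlt⟩ := hcon e heF
      have := heZ ⟨d, hdF⟩
      simp only [hZ, Set.mem_setOf_eq] at this
      linarith
    obtain ⟨u, hu⟩ := hFcomp.elim_finite_subfamily_closed Z hZc hempty
    rcases u.eq_empty_or_nonempty with rfl | hune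
    · simp only [Finset.notMem_empty, Set.iInter_of_empty, Set.iInter_univ,
        Set.inter_univ] at hu
      exact hFne.ne_empty hu
    obtain ⟨D0, hD0⟩ := hune
    haveI : Nonempty {D : F // D ∈ u} := ⟨⟨D0, hD0⟩⟩
    set dj : {D : F // D ∈ u} → (ι → ℝ) := fun j => (j.1 : ι → ℝ) with hdj
    have hdjF : ∀ j, dj j ∈ F := fun j => j.1.2
    set Φ : (ι → ℝ) → ({D : F // D ∈ u} → ℝ) :=
      fun e j => ∑ x, R (dj j) x * (dj j x - e x) with hΦ
    have hΦcont : Continuous Φ := continuous_pi fun j =>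
      continuous_finset_sum _ fun x _ =>
        continuous_const.mul (continuous_const.sub (continuous_apply x))
    set Vimg := Φ '' F with hVimg
    set N : Set ({D : F // D ∈ u} → ℝ) := {y | ∀ j, y j ≤ 0} with hN
    have hVconv : Convex ℝ Vimg := by
      rintro y1 ⟨e1, he1, rfl⟩ y2 ⟨e2, he2, rfl⟩ a b ha hb hab
      refine ⟨a • e1 + b • e2, hFconv he1 he2 ha hb hab, ?_⟩
      funext j
      show Φ (a • e1 + b • e2) j = a * Φ e1 j + b * Φ e2 j
      simp only [hΦ]
      rw [Finset.mul_sum, Finset.mul_sum, ← Finset.sum_add_distrib]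
      refine Finset.sum_congr rfl fun x _ => ?_
      have hx : (a • e1 + b • e2) x = a * e1 x + b * e2 x := rfl
      rw [hx]
      linear_combination (-(R (dj j) x * dj j x)) * hab
    have hVcomp : IsCompact Vimg := hFcomp.image hΦcont
    have hNconv : Convex ℝ N := by
      intro y1 h1 y2 h2 a b ha hb _
      intro j
      show a * y1 j + b * y2 j ≤ 0
      exact add_nonpos (mul_nonpos_of_nonneg_of_nonpos ha (h1 j))
        (mul_nonpos_of_nonneg_of_nonpos hb (h2 j))
    have hNclosed : IsClosed N := by
      rw [hN, Set.setOf_forall]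
      exact isClosed_iInter fun j => isClosed_le (continuous_apply j) continuous_const
    have hdisj : Disjoint Vimg N := by
      rw [Set.disjoint_left]
      rintro y ⟨e, heF, rfl⟩ hyN
      have hmem : e ∈ F ∩ ⋂ D ∈ u, Z D := by
        refine ⟨heF, ?_⟩
        rw [Set.mem_iInter₂]
        intro D hD
        show ∑ x, R D.1 x * D.1 x ≤ ∑ x, R D.1 x * e x
        have := hyN ⟨D, hD⟩
        simp only [hΦ, Set.mem_setOf_eq] at this
        have hexp : ∑ x, R D.1 x * (D.1 x - e x) =
            ∑ x, R D.1 x * D.1 x - ∑ x, R D.1 x * e x := by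
          simp [mul_sub, Finset.sum_sub_distrib]
        rw [hexp] at this
        linarith
      rw [hu] at hmem
      exact Set.notMem_empty e hmem
    obtain ⟨f, uu, vv, hfV, huv, hfN⟩ :=
      geometric_hahn_banach_compact_closed hVconv hVcomp hNconv hNclosed hdisj
    have hv0 : vv < 0 := by
      have := hfN 0 (fun j => le_refl 0)
      simpa using this
    set cj : {D : F // D ∈ u} → ℝ :=
      fun j => f (fun j' => if j = j' then (1 : ℝ) else 0) with hcj0
    have hcj : ∀ j, cj j ≤ 0 := by
      intro j
      by_contra hpos
      push_neg at hpos
      set t := vv / cj j with ht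
      have htneg : t ≤ 0 := div_nonpos_of_nonpos_of_nonneg hv0.le hpos.le
      have hbN : (t • fun j' => if j = j' then (1 : ℝ) else 0) ∈ N := by
        intro j'
        show t * (if j = j' then (1 : ℝ) else 0) ≤ 0
        split
        · simpa using htneg
        · simp
      have hb := hfN _ hbN
      rw [map_smul, smul_eq_mul] at hb
      have hb2 : vv < t * cj j := hb
      rw [ht, div_mul_cancel₀ vv (ne_of_gt hpos)] at hb2
      exact lt_irrefl _ hb2
    have hfdec : ∀ y : {D : F // D ∈ u} → ℝ, f y = ∑ j, y j * cj j := by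
      intro y
      have := LinearMap.pi_apply_eq_sum_univ (f : ({D : F // D ∈ u} → ℝ) →ₗ[ℝ] ℝ) y
      simpa [hcj0, smul_eq_mul] using this
    set lam : {D : F // D ∈ u} → ℝ := fun j => -cj j with hlam
    have hlamnn : ∀ j, 0 ≤ lam j := fun j => neg_nonneg.mpr (hcj j)
    have hkey : ∀ e ∈ F, 0 < ∑ j, lam j * Φ e j := by
      intro e heF
      have h1 : f (Φ e) < 0 := lt_trans (hfV _ ⟨e, heF, rfl⟩) (lt_trans huv hv0)
      rw [hfdec] at h1
      have h2 : ∑ j, lam j * Φ e j = -(∑ j, Φ e j * cj j) := by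
        rw [← Finset.sum_neg_distrib]
        exact Finset.sum_congr rfl fun j _ => by simp [hlam]; ring
      rw [h2]
      linarith
    set ssum := ∑ j, lam j with hssumdef
    have hssum : 0 < ssum := by
      obtain ⟨e0, he0⟩ := hFne
      by_contra hns
      push_neg at hns
      have hz : ssum = 0 := le_antisymm hns (Finset.sum_nonneg fun j _ => hlamnn j)
      have hall : ∀ j, lam j = 0 := fun j =>
        (Finset.sum_eq_zero_iff_of_nonneg (fun j _ => hlamnn j)).mp hz j (Finset.mem_univ j)
      have := hkey e0 he0
      simp [hall] at this
    set w : {D : F // D ∈ u} → ℝ := fun j => lam j / ssum with hw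
    have hwnn : ∀ j, 0 ≤ w j := fun j => div_nonneg (hlamnn j) hssum.le
    have hwsum : ∑ j, w j = 1 := by
      simp only [hw]
      rw [← Finset.sum_div]
      exact div_self (ne_of_gt hssum)
    set estar := ∑ j, w j • dj j with hestar
    have hestarF : estar ∈ F :=
      hFconv.sum_mem (fun j _ => hwnn j) hwsum (fun j _ => hdjF j)
    set B : {D : F // D ∈ u} → {D : F // D ∈ u} → ℝ :=
      fun j l => ∑ x, R (dj j) x * (dj j x - dj l x) with hB
    have hBB : ∀ j l, B j l + B l j ≤ 0 := by
      intro j l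
      have hm := hRmono (dj j) (hdjF j) (dj l) (hdjF l)
      have hexp : B j l + B l j = ∑ x, (R (dj j) x - R (dj l) x) * (dj j x - dj l x) := by
        simp only [hB]
        rw [← Finset.sum_add_distrib]
        exact Finset.sum_congr rfl fun x _ => by ring
      rw [hexp]
      exact hm
    have hΦest : ∀ j, Φ estar j = ∑ l, w l * B j l := by
      intro j
      simp only [hΦ, hB, Finset.mul_sum]
      rw [Finset.sum_comm]
      refine Finset.sum_congr rfl fun x _ => ?_
      have hex : estar x = ∑ l, w l * dj l x := by
        simp [hestar, Finset.sum_apply]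
      have hjj : dj j x = ∑ l, w l * dj j x := by
        rw [← Finset.sum_mul, hwsum, one_mul]
      calc R (dj j) x * (dj j x - estar x)
          = ∑ l, w l * (R (dj j) x * (dj j x - dj l x)) := by
            rw [hex]
            conv_lhs => rw [hjj]
            rw [← Finset.sum_sub_distrib, Finset.mul_sum]
            exact Finset.sum_congr rfl fun l _ => by ring
        _ = ∑ l, w l * (R (dj j) x * (dj j x - dj l x)) := rfl
    have hBsum : ∑ j, w j * Φ estar j ≤ 0 := by
      have hdouble : ∑ j, w j * Φ estar j = ∑ j, ∑ l, (w j * w l) * B j l := by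
        refine Finset.sum_congr rfl fun j _ => ?_
        rw [hΦest j, Finset.mul_sum]
        exact Finset.sum_congr rfl fun l _ => by ring
      have hswap : ∑ j, ∑ l, (w j * w l) * B l j = ∑ j, ∑ l, (w j * w l) * B j l := by
        rw [Finset.sum_comm]
        exact Finset.sum_congr rfl fun a _ => Finset.sum_congr rfl fun b _ => by ring
      have h2 : (∑ j, ∑ l, (w j * w l) * B j l) + (∑ j, ∑ l, (w j * w l) * B l j) =
          ∑ j, ∑ l, (w j * w l) * (B j l + B l j) := by
        rw [← Finset.sum_add_distrib]
        refine Finset.sum_congr rfl fun j _ => ?_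
        rw [← Finset.sum_add_distrib]
        exact Finset.sum_congr rfl fun l _ => by ring
      have h3 : ∑ j, ∑ l, (w j * w l) * (B j l + B l j) ≤ 0 :=
        Finset.sum_nonpos fun j _ => Finset.sum_nonpos fun l _ =>
          mul_nonpos_of_nonneg_of_nonpos (mul_nonneg (hwnn j) (hwnn l)) (hBB j l)
      rw [hdouble]
      linarith [hswap, h2, h3]
    have hfin := hkey estar hestarF
    have hmulsum : ∑ j, lam j * Φ estar j = ssum * ∑ j, w j * Φ estar j := by
      rw [Finset.mul_sum]
      refine Finset.sum_congr rfl fun j _ => ?_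
      simp only [hw]
      field_simp
    rw [hmulsum] at hfin
    nlinarith
  -- Step 2: Minty → Stampacchia via continuity.
  obtain ⟨estar, heF, hminty'⟩ := hminty
  refine ⟨estar, heF, fun d hdF => ?_⟩
  have hS : ∑ x, R estar x * (d x - estar x) ≤ 0 := by
    set a : ℕ → ℝ := fun n => 1 / (n + 1) with ha
    have hapos : ∀ n : ℕ, 0 < a n ∧ a n ≤ 1 := by
      intro n
      constructor
      · simp only [ha]; positivity
      · simp only [ha]
        rw [div_le_one (by positivity)]
        linarith [Nat.cast_nonneg (α := ℝ) n]
    set e : ℕ → (ι → ℝ) := fun n => (1 - a n) • estar + a n • d with he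
    have heF' : ∀ n, e n ∈ F := fun n =>
      hFconv heF hdF (by linarith [(hapos n).1, (hapos n).2]) (hapos n).1.le (by ring)
    have hval : ∀ n, ∑ x, R (e n) x * (d x - estar x) ≤ 0 := by
      intro n
      have h1 := hminty' (e n) (heF' n)
      have h2 : ∑ x, R (e n) x * (e n x - estar x) ≤ 0 := by
        have : ∑ x, R (e n) x * (e n x - estar x) =
            ∑ x, R (e n) x * e n x - ∑ x, R (e n) x * estar x := by
          simp [mul_sub, Finset.sum_sub_distrib]
        rw [this]
        linarith
      have h3 : ∑ x, R (e n) x * (e n x - estar x) =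
          a n * ∑ x, R (e n) x * (d x - estar x) := by
        rw [Finset.mul_sum]
        refine Finset.sum_congr rfl fun x _ => ?_
        have : e n x = (1 - a n) * estar x + a n * d x := rfl
        rw [this]; ring
      rw [h3] at h2
      nlinarith [(hapos n).1]
    have htends : Tendsto e atTop (𝓝 estar) := by
      rw [tendsto_pi_nhds]
      intro x
      have haz : Tendsto a atTop (𝓝 0) := tendsto_one_div_add_atTop_nhds_zero_nat
      have : Tendsto (fun n => (1 - a n) * estar x + a n * d x) atTop
          (𝓝 ((1 - 0) * estar x + 0 * d x)) :=
        ((tendsto_const_nhds.sub haz).mul tendsto_const_nhds).add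
          (haz.mul tendsto_const_nhds)
      simpa [he] using this
    have hlim : Tendsto (fun n => ∑ x, R (e n) x * (d x - estar x)) atTop
        (𝓝 (∑ x, R estar x * (d x - estar x))) := by
      have hc : ContinuousWithinAt (fun d' => ∑ x, R d' x * (d x - estar x)) F estar :=
        (hRcont (fun x => d x - estar x)) estar heF
      exact hc.tendsto.comp
        (tendsto_nhdsWithin_of_tendsto_nhds_of_eventually_within e htends
          (Filter.Eventually.of_forall heF'))
    exact le_of_tendsto hlim (Filter.Eventually.of_forall hval)
  have hdist : ∑ x, R estar x * (d x - estar x) =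
      ∑ x, R estar x * d x - ∑ x, R estar x * estar x := by
    simp [mul_sub, Finset.sum_sub_distrib]
  rw [hdist] at hS
  linarith

end MintyVI
/-- Theorem 3.2 (Uniqueness of CMFG NE): under strict feasibility, continuity, and the
Lasry–Lions monotonicity condition (with `p` and `c` independent of the mean-field
argument), a CMFG Nash equilibrium exists and its mean-field flow is unique. -/
theorem cmfg_nash_exists_unique {S A : Type*} [Fintype S] [Fintype A] [Nonempty S] [Nonempty A]
    (T k : ℕ) (μ0 : S → ℝ) (hμ0 : IsSimplex μ0)
    (p : ℕ → S → A → (S × A → ℝ) → S → ℝ) (hp : IsKernel T p)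
    (r : ℕ → S → A → (S × A → ℝ) → ℝ)
    (c : ℕ → S → A → (S × A → ℝ) → Fin k → ℝ) (γ0 : Fin k → ℝ) (δ : ℝ)
    (hfeas : StrictFeasible T k μ0 p c γ0 δ)
    (hcont : ContinuousData T k p r c)
    (hp_indep : ∀ t ≤ T, ∀ (s : S) (a : A) (m m' : S × A → ℝ),
      IsSimplex m → IsSimplex m' → p t s a m = p t s a m')
    (hc_indep : ∀ t ≤ T, ∀ (s : S) (a : A) (m m' : S × A → ℝ),
      IsSimplex m → IsSimplex m' → c t s a m = c t s a m')
    (hmono : ∀ L1 L2 : ℕ → S × A → ℝ, IsFlow L1 → IsFlow L2 →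
      (∑ t ∈ Finset.range (T + 1), ∑ sa : S × A,
          (r t sa.1 sa.2 (L1 t) - r t sa.1 sa.2 (L2 t)) * (L1 t sa - L2 t sa)) ≤ 0 ∧
      ((∑ t ∈ Finset.range (T + 1), ∑ sa : S × A,
          (r t sa.1 sa.2 (L1 t) - r t sa.1 sa.2 (L2 t)) * (L1 t sa - L2 t sa)) = 0 ↔
        ∀ t ≤ T, L1 t = L2 t)) :
    (∃ (π : ℕ → S → A → ℝ) (L : ℕ → S × A → ℝ),
        IsFlow L ∧ IsCMFGNash T k μ0 p r c γ0 π L) ∧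
    (∀ (π1 π2 : ℕ → S → A → ℝ) (L1 L2 : ℕ → S × A → ℝ),
        IsFlow L1 → IsFlow L2 →
        IsCMFGNash T k μ0 p r c γ0 π1 L1 → IsCMFGNash T k μ0 p r c γ0 π2 L2 →
        ∀ t ≤ T, L1 t = L2 t) := by
  classical
  obtain ⟨hδ, hfeas2⟩ := hfeas
  obtain ⟨hcp, hcr, hcc⟩ := hcont
  -- reindexing helper
  have hvec : ∀ g : ℕ → S × A → ℝ,
      (∑ x : Fin (T + 1) × S × A, g (x.1 : ℕ) x.2) =
        ∑ t ∈ Finset.range (T + 1), ∑ sa : S × A, g t sa := by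
    intro g
    rw [Fintype.sum_prod_type]
    exact Fin.sum_univ_eq_sum_range (fun n => ∑ sa : S × A, g n sa) (T + 1)
  set q : ℕ → S → A → S → ℝ := fun t s a => p t s a (unifSA S A) with hqdef
  have hq : ∀ t < T, ∀ (s : S) (a : A), IsSimplex (q t s a) :=
    fun t ht s a => hp t (le_of_lt ht) s a _ unifSA_simplex
  set K := occSet S A T μ0 q with hKdef
  set Cc : Fin k → (Fin (T + 1) × S × A → ℝ) → ℝ :=
    fun i d => ∑ x : Fin (T + 1) × S × A, c (x.1 : ℕ) x.2.1 x.2.2 (unifSA S A) i * d x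
    with hCc
  set F : Set (Fin (T + 1) × S × A → ℝ) := {d | d ∈ K ∧ ∀ i, Cc i d ≤ γ0 i} with hFdef
  -- cost of a policy is independent of the flow
  have hCostVec : ∀ π, IsPolicy π → ∀ L, IsFlow L → ∀ i,
      Cost T k μ0 p c π L i = Cc i (fun x => psiInd μ0 p π (x.1 : ℕ) x.2) := by
    intro π hπ L hL i
    rw [cost_eq_range T k μ0 hμ0 p hp hp_indep c hc_indep π hπ L hL i,
      ← hvec (fun t sa => c t sa.1 sa.2 (unifSA S A) i * psiInd μ0 p π t sa)]
  -- F is convex, compact, nonempty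
  have hKconv := occSet_convex T μ0 q
  have hFconv : Convex ℝ F := by
    intro d1 h1 d2 h2 a b ha hb hab
    refine ⟨hKconv h1.1 h2.1 ha hb hab, fun i => ?_⟩
    have hlin : Cc i (a • d1 + b • d2) = a * Cc i d1 + b * Cc i d2 := by
      simp only [hCc]
      rw [Finset.mul_sum, Finset.mul_sum, ← Finset.sum_add_distrib]
      refine Finset.sum_congr rfl fun x _ => ?_
      have hx : (a • d1 + b • d2) x = a * d1 x + b * d2 x := rfl
      rw [hx]; ring
    rw [hlin]
    calc a * Cc i d1 + b * Cc i d2 ≤ a * γ0 i + b * γ0 i :=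
          add_le_add (mul_le_mul_of_nonneg_left (h1.2 i) ha)
            (mul_le_mul_of_nonneg_left (h2.2 i) hb)
      _ = γ0 i := by rw [← add_mul, hab, one_mul]
  have hFclosed : IsClosed F := by
    have h2 : IsClosed {d : Fin (T + 1) × S × A → ℝ | ∀ i, Cc i d ≤ γ0 i} := by
      rw [Set.setOf_forall]
      exact isClosed_iInter fun i => isClosed_le
        (continuous_finset_sum _ fun x _ => continuous_const.mul (continuous_apply x))
        continuous_const
    exact (occSet_closed T μ0 q).inter h2
  have hFcomp : IsCompact F :=
    (occSet_compact T μ0 hμ0 q hq).of_isClosed_subset hFclosed fun d hd => hd.1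
  have hLu : IsFlow (fun _ : ℕ => unifSA S A) := fun _ => unifSA_simplex
  have hπ0ex : ∃ π0, IsPolicy π0 ∧ ∀ i, Cost T k μ0 p c π0 (fun _ => unifSA S A) i ≤ γ0 i := by
    rcases isEmpty_or_nonempty (Fin k) with hk | hk
    · refine ⟨fun _ _ _ => (Fintype.card A : ℝ)⁻¹, fun t s => ⟨fun a => by positivity, ?_⟩,
        fun i => isEmptyElim i⟩
      have h : (Fintype.card A : ℝ) ≠ 0 := by exact_mod_cast Fintype.card_ne_zero
      simp only [Finset.sum_const, Finset.card_univ, nsmul_eq_mul]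
      exact mul_inv_cancel₀ h
    · obtain ⟨π0, hπ0, hcost, _⟩ :=
        hfeas2 (fun _ => unifSA S A) hLu (Classical.arbitrary (Fin k))
      exact ⟨π0, hπ0, hcost⟩
  obtain ⟨π0, hπ0, hπ0cost⟩ := hπ0ex
  have hFne : F.Nonempty := by
    refine ⟨fun x => psiInd μ0 p π0 (x.1 : ℕ) x.2,
      policy_mem_occSet T μ0 hμ0 p hp hp_indep π0 hπ0, fun i => ?_⟩
    rw [← hCostVec π0 hπ0 _ hLu i]
    exact hπ0cost i
  -- the reward operator on occupation vectors
  set Rm : (Fin (T + 1) × S × A → ℝ) → (Fin (T + 1) × S × A → ℝ) :=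
    fun d x => r (x.1 : ℕ) x.2.1 x.2.2 (fun sa => d (x.1, sa)) with hRm
  have hRcont : ∀ w : Fin (T + 1) × S × A → ℝ,
      ContinuousOn (fun d => ∑ x : Fin (T + 1) × S × A, Rm d x * w x) F := by
    intro w
    refine continuousOn_finset_sum _ fun x _ => ContinuousOn.mul ?_ continuousOn_const
    have hmaps : Set.MapsTo (fun d : Fin (T + 1) × S × A → ℝ => fun sa : S × A => d (x.1, sa))
        F {m : S × A → ℝ | IsSimplex m} :=
      fun d hd => occSet_slice T μ0 hμ0 q hq hd.1 x.1
    have hproj : Continuous (fun d : Fin (T + 1) × S × A → ℝ => fun sa : S × A => d (x.1, sa)) :=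
      continuous_pi fun sa => continuous_apply _
    exact ((hcr (x.1 : ℕ) (Nat.lt_succ_iff.mp x.1.isLt) x.2.1 x.2.2).comp
      hproj.continuousOn hmaps)
  have hRmono : ∀ d1 ∈ F, ∀ d2 ∈ F,
      (∑ x : Fin (T + 1) × S × A, (Rm d1 x - Rm d2 x) * (d1 x - d2 x)) ≤ 0 := by
    intro d1 h1 d2 h2
    set L1 : ℕ → S × A → ℝ :=
      fun t => if h : t < T + 1 then (fun sa => d1 (⟨t, h⟩, sa)) else unifSA S A with hL1
    set L2 : ℕ → S × A → ℝ :=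
      fun t => if h : t < T + 1 then (fun sa => d2 (⟨t, h⟩, sa)) else unifSA S A with hL2
    have hf1 : IsFlow L1 := by
      intro t
      by_cases h : t < T + 1
      · simp only [hL1]; rw [dif_pos h]
        exact occSet_slice T μ0 hμ0 q hq h1.1 ⟨t, h⟩
      · simp only [hL1]; rw [dif_neg h]; exact unifSA_simplex
    have hf2 : IsFlow L2 := by
      intro t
      by_cases h : t < T + 1
      · simp only [hL2]; rw [dif_pos h]
        exact occSet_slice T μ0 hμ0 q hq h2.1 ⟨t, h⟩
      · simp only [hL2]; rw [dif_neg h]; exact unifSA_simplex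
    have hmle := (hmono L1 L2 hf1 hf2).1
    have key : (∑ x : Fin (T + 1) × S × A, (Rm d1 x - Rm d2 x) * (d1 x - d2 x)) =
        ∑ t ∈ Finset.range (T + 1), ∑ sa : S × A,
          (r t sa.1 sa.2 (L1 t) - r t sa.1 sa.2 (L2 t)) * (L1 t sa - L2 t sa) := by
      rw [← hvec (fun t sa => (r t sa.1 sa.2 (L1 t) - r t sa.1 sa.2 (L2 t)) *
        (L1 t sa - L2 t sa))]
      refine Finset.sum_congr rfl fun x _ => ?_
      have e1 : L1 (x.1 : ℕ) = fun sa => d1 (x.1, sa) := by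
        simp only [hL1]; rw [dif_pos x.1.isLt]
      have e2 : L2 (x.1 : ℕ) = fun sa => d2 (x.1, sa) := by
        simp only [hL2]; rw [dif_pos x.1.isLt]
      rw [e1, e2]
    rw [key]
    exact hmle
  obtain ⟨estar, heF, hvi⟩ := exists_vi_solution F hFne hFconv hFcomp Rm hRcont hRmono
  obtain ⟨πs, hπs, hψ⟩ := exists_policy_of_occSet T μ0 hμ0 p hp hp_indep heF.1
  set Lstar : ℕ → S × A → ℝ :=
    fun t => if h : t < T + 1 then (fun sa => estar (⟨t, h⟩, sa)) else unifSA S A with hLs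
  have hLflow : IsFlow Lstar := by
    intro t
    by_cases h : t < T + 1
    · simp only [hLs]; rw [dif_pos h]
      exact occSet_slice T μ0 hμ0 q hq heF.1 ⟨t, h⟩
    · simp only [hLs]; rw [dif_neg h]; exact unifSA_simplex
  have hLcons : ∀ t ≤ T, Lstar t = psiInd μ0 p πs t := by
    intro t ht
    have h : t < T + 1 := Nat.lt_succ_of_le ht
    simp only [hLs]; rw [dif_pos h]
    exact (hψ t h).symm
  have hdvec : (fun x : Fin (T + 1) × S × A => psiInd μ0 p πs (x.1 : ℕ) x.2) = estar := by
    funext x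
    exact congrFun (hψ (x.1 : ℕ) x.1.isLt) x.2
  have hVstar : ∀ π, IsPolicy π → V T μ0 p r π Lstar =
      ∑ x : Fin (T + 1) × S × A, Rm estar x * psiInd μ0 p π (x.1 : ℕ) x.2 := by
    intro π hπ
    rw [V_eq_range T μ0 hμ0 p hp hp_indep r π hπ Lstar hLflow,
      ← hvec (fun t sa => r t sa.1 sa.2 (Lstar t) * psiInd μ0 p π t sa)]
    refine Finset.sum_congr rfl fun x _ => ?_
    have e1 : Lstar (x.1 : ℕ) = fun sa => estar (x.1, sa) := by
      simp only [hLs]; rw [dif_pos x.1.isLt]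
    rw [e1]
  constructor
  · -- existence
    refine ⟨πs, Lstar, hLflow, ⟨⟨hπs, fun i => ?_, fun π' hπ' hcost' => ?_⟩,
      fun t ht => hLcons t ht⟩⟩
    · rw [hCostVec πs hπs Lstar hLflow i, hdvec]
      exact heF.2 i
    · have hd' : (fun x : Fin (T + 1) × S × A => psiInd μ0 p π' (x.1 : ℕ) x.2) ∈ F := by
        refine ⟨policy_mem_occSet T μ0 hμ0 p hp hp_indep π' hπ', fun i => ?_⟩
        rw [← hCostVec π' hπ' Lstar hLflow i]
        exact hcost' i
      have hle := hvi _ hd'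
      rw [hVstar π' hπ', hVstar πs hπs]
      calc (∑ x : Fin (T + 1) × S × A, Rm estar x * psiInd μ0 p π' (x.1 : ℕ) x.2)
          ≤ ∑ x : Fin (T + 1) × S × A, Rm estar x * estar x := hle
        _ = ∑ x : Fin (T + 1) × S × A, Rm estar x * psiInd μ0 p πs (x.1 : ℕ) x.2 := by
            refine (Finset.sum_congr rfl fun x _ => ?_)
            rw [congrFun hdvec x]
  · -- uniqueness
    intro π1 π2 L1 L2 hL1 hL2 hN1 hN2
    obtain ⟨⟨hπ1, hc1, hopt1⟩, hcons1⟩ := hN1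
    obtain ⟨⟨hπ2, hc2, hopt2⟩, hcons2⟩ := hN2
    have hc21 : ∀ i, Cost T k μ0 p c π2 L1 i ≤ γ0 i := fun i => by
      rw [hCostVec π2 hπ2 L1 hL1 i, ← hCostVec π2 hπ2 L2 hL2 i]
      exact hc2 i
    have hc12 : ∀ i, Cost T k μ0 p c π1 L2 i ≤ γ0 i := fun i => by
      rw [hCostVec π1 hπ1 L2 hL2 i, ← hCostVec π1 hπ1 L1 hL1 i]
      exact hc1 i
    have h21 := hopt1 π2 hπ2 hc21
    have h12 := hopt2 π1 hπ1 hc12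
    have hVgen : ∀ (πa : ℕ → S → A → ℝ) (La Lb : ℕ → S × A → ℝ),
        IsPolicy πa → IsFlow Lb → (∀ t ≤ T, La t = psiInd μ0 p πa t) →
        V T μ0 p r πa Lb = ∑ t ∈ Finset.range (T + 1), ∑ sa : S × A,
          r t sa.1 sa.2 (Lb t) * La t sa := by
      intro πa La Lb hπa hLb hcons
      rw [V_eq_range T μ0 hμ0 p hp hp_indep r πa hπa Lb hLb]
      refine Finset.sum_congr rfl fun t htm => Finset.sum_congr rfl fun sa _ => ?_
      rw [hcons t (Nat.lt_succ_iff.mp (Finset.mem_range.mp htm))]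
    rw [hVgen π1 L1 L1 hπ1 hL1 hcons1, hVgen π2 L2 L1 hπ2 hL1 hcons2] at h21
    rw [hVgen π1 L1 L2 hπ1 hL2 hcons1, hVgen π2 L2 L2 hπ2 hL2 hcons2] at h12
    have hexpand : (∑ t ∈ Finset.range (T + 1), ∑ sa : S × A,
        (r t sa.1 sa.2 (L1 t) - r t sa.1 sa.2 (L2 t)) * (L1 t sa - L2 t sa)) =
        ((∑ t ∈ Finset.range (T + 1), ∑ sa : S × A, r t sa.1 sa.2 (L1 t) * L1 t sa) -
          (∑ t ∈ Finset.range (T + 1), ∑ sa : S × A, r t sa.1 sa.2 (L1 t) * L2 t sa)) -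
        ((∑ t ∈ Finset.range (T + 1), ∑ sa : S × A, r t sa.1 sa.2 (L2 t) * L1 t sa) -
          (∑ t ∈ Finset.range (T + 1), ∑ sa : S × A, r t sa.1 sa.2 (L2 t) * L2 t sa)) := by
      simp only [← Finset.sum_sub_distrib]
      refine Finset.sum_congr rfl fun t _ => Finset.sum_congr rfl fun sa _ => by ring
    have hge : 0 ≤ ∑ t ∈ Finset.range (T + 1), ∑ sa : S × A,
        (r t sa.1 sa.2 (L1 t) - r t sa.1 sa.2 (L2 t)) * (L1 t sa - L2 t sa) := by
      rw [hexpand]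
      linarith
    have hle := (hmono L1 L2 hL1 hL2).1
    exact (hmono L1 L2 hL1 hL2).2.mp (le_antisymm hle hge)

end CMFG
end

section
/- Fix a mean-field flow L. (i) If π* is an optimal policy of CMDP(L), then d* := Ψ(π*, L) is an optimal solution of LP(L) and π* ∈ Π(d*). (ii) Conversely, if d* is an optimal solution of LP(L), then every policy π* ∈ Π(d*) is an optimal policy of CMDP(L). -/
open Finset

namespace CMFG

variable {S A : Type*} [Fintype S] [Fintype A]

section AuxLemmas

variable {S A : Type*} [Fintype S] [Fintype A]

/-- State-mass process associated with `psi`. -/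
def psiM (μ0 : S → ℝ) (p : ℕ → S → A → (S × A → ℝ) → S → ℝ)
    (π : ℕ → S → A → ℝ) (L : ℕ → S × A → ℝ) : ℕ → S → ℝ
  | 0 => μ0
  | t + 1 => fun s => ∑ sa' : S × A, p t sa'.1 sa'.2 (L t) s * psi μ0 p π L t sa'

lemma psi_eq_mul (μ0 : S → ℝ) (p : ℕ → S → A → (S × A → ℝ) → S → ℝ)
    (π : ℕ → S → A → ℝ) (L : ℕ → S × A → ℝ) (t : ℕ) (s : S) (a : A) :
    psi μ0 p π L t (s, a) = π t s a * psiM μ0 p π L t s := by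
  cases t <;> rfl

lemma sum_psi_eq {μ0 : S → ℝ} {p : ℕ → S → A → (S × A → ℝ) → S → ℝ}
    {π : ℕ → S → A → ℝ} {L : ℕ → S × A → ℝ} (hπ : IsPolicy π) (t : ℕ) (s : S) :
    ∑ a : A, psi μ0 p π L t (s, a) = psiM μ0 p π L t s := by
  simp only [psi_eq_mul, ← Finset.sum_mul, (hπ t s).2, one_mul]

lemma psiM_nonneg {T : ℕ} {μ0 : S → ℝ} {p : ℕ → S → A → (S × A → ℝ) → S → ℝ}
    {π : ℕ → S → A → ℝ} {L : ℕ → S × A → ℝ} (hμ0 : IsSimplex μ0)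
    (hp : IsKernel T p) (hL : IsFlow L) (hπ : IsPolicy π) :
    ∀ t ≤ T, ∀ s, 0 ≤ psiM μ0 p π L t s := by
  intro t
  induction t with
  | zero => exact fun _ s => hμ0.1 s
  | succ t ih =>
    intro ht s
    have ht' : t ≤ T := Nat.le_of_succ_le ht
    apply Finset.sum_nonneg
    intro sa _
    refine mul_nonneg ((hp t ht' sa.1 sa.2 (L t) (hL t)).1 s) ?_
    rw [show sa = (sa.1, sa.2) from rfl, psi_eq_mul]
    exact mul_nonneg ((hπ t sa.1).1 sa.2) (ih ht' sa.1)

lemma psi_nonneg {T : ℕ} {μ0 : S → ℝ} {p : ℕ → S → A → (S × A → ℝ) → S → ℝ}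
    {π : ℕ → S → A → ℝ} {L : ℕ → S × A → ℝ} (hμ0 : IsSimplex μ0)
    (hp : IsKernel T p) (hL : IsFlow L) (hπ : IsPolicy π) :
    ∀ t ≤ T, ∀ sa : S × A, 0 ≤ psi μ0 p π L t sa := by
  intro t ht sa
  rw [show sa = (sa.1, sa.2) from rfl, psi_eq_mul]
  exact mul_nonneg ((hπ t sa.1).1 sa.2) (psiM_nonneg hμ0 hp hL hπ t ht sa.1)

lemma inPi_psi {T : ℕ} {μ0 : S → ℝ} {p : ℕ → S → A → (S × A → ℝ) → S → ℝ}
    {π : ℕ → S → A → ℝ} {L : ℕ → S × A → ℝ} (hπ : IsPolicy π) :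
    InPi T (psi μ0 p π L) π := by
  refine ⟨hπ, fun t _ s a hpos => ?_⟩
  rw [sum_psi_eq hπ] at hpos ⊢
  rw [psi_eq_mul, mul_div_assoc, div_self hpos.ne', mul_one]

lemma toFam_lt {T : ℕ} (d : Fin (T + 1) × S × A → ℝ) (t : ℕ) (h : t < T + 1)
    (sa : S × A) : toFam T d t sa = d (⟨t, h⟩, sa.1, sa.2) := dif_pos h

lemma toFam_coe {T : ℕ} (d : Fin (T + 1) × S × A → ℝ) (t : Fin (T + 1)) (sa : S × A) :
    toFam T d (t : ℕ) sa = d (t, sa) := toFam_lt d _ t.isLt sa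

lemma toFam_toVec {T : ℕ} (g : ℕ → S × A → ℝ) (t : ℕ) (h : t < T + 1) (sa : S × A) :
    toFam T (toVec T g) t sa = g t sa := toFam_lt _ t h sa

lemma toFam_nonneg {T : ℕ} {d : Fin (T + 1) × S × A → ℝ} (hd : ∀ x, 0 ≤ d x)
    (t : ℕ) (sa : S × A) : 0 ≤ toFam T d t sa := by
  unfold toFam
  split
  · exact hd _
  · exact le_refl 0

lemma mulVec_AL_lt [DecidableEq S] {T : ℕ} (p : ℕ → S → A → (S × A → ℝ) → S → ℝ)
    (L : ℕ → S × A → ℝ) (d : Fin (T + 1) × S × A → ℝ)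
    (t : Fin (T + 1)) (ht : (t : ℕ) < T) (s : S) :
    mulVec (ALmat T p L) d (t, s)
      = (∑ sa : S × A, p (t : ℕ) sa.1 sa.2 (L (t : ℕ)) s * d (t, sa))
        - ∑ a : A, d (⟨(t : ℕ) + 1, by omega⟩, s, a) := by
  simp only [mulVec, ALmat, ht, if_true]
  rw [Fintype.sum_prod_type]
  simp only [add_mul, ite_mul, zero_mul, neg_mul, one_mul, Finset.sum_add_distrib]
  congr 1
  · rw [Finset.sum_eq_single t]
    · simp
    · intro u _ hu
      apply Finset.sum_eq_zero
      intro sa _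
      rw [if_neg hu]
    · simp
  · rw [Finset.sum_eq_single (⟨(t : ℕ) + 1, by omega⟩ : Fin (T + 1))]
    · rw [Fintype.sum_prod_type, Finset.sum_eq_single s]
      · simp [← Finset.sum_neg_distrib]
      · intro s' _ hs'
        apply Finset.sum_eq_zero
        intro a _
        rw [if_neg]
        rintro ⟨-, h2⟩
        exact hs' h2
      · simp
    · intro u _ hu
      apply Finset.sum_eq_zero
      intro sa _
      rw [if_neg]
      rintro ⟨h1, -⟩
      exact hu (Fin.ext h1)
    · simp
  done

lemma mulVec_AL_last [DecidableEq S] {T : ℕ} (p : ℕ → S → A → (S × A → ℝ) → S → ℝ)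
    (L : ℕ → S × A → ℝ) (d : Fin (T + 1) × S × A → ℝ)
    (t : Fin (T + 1)) (ht : ¬ (t : ℕ) < T) (s : S) :
    mulVec (ALmat T p L) d (t, s) = ∑ a : A, d (⟨0, Nat.succ_pos T⟩, s, a) := by
  simp only [mulVec, ALmat, ht, if_false]
  rw [Fintype.sum_prod_type]
  simp only [ite_mul, zero_mul, one_mul]
  rw [Finset.sum_eq_single (⟨0, Nat.succ_pos T⟩ : Fin (T + 1))]
  · rw [Fintype.sum_prod_type, Finset.sum_eq_single s]
    · simp
    · intro s' _ hs'
      apply Finset.sum_eq_zero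
      intro a _
      rw [if_neg]
      rintro ⟨-, h2⟩
      exact hs' h2
    · simp
  · intro u _ hu
    apply Finset.sum_eq_zero
    intro sa _
    rw [if_neg]
    rintro ⟨h1, -⟩
    exact hu (Fin.ext h1)
  · simp

lemma psi_constraint [DecidableEq S] {T : ℕ} {μ0 : S → ℝ}
    {p : ℕ → S → A → (S × A → ℝ) → S → ℝ} {π : ℕ → S → A → ℝ}
    {L : ℕ → S × A → ℝ} (hπ : IsPolicy π) :
    mulVec (ALmat T p L) (toVec T (psi μ0 p π L)) = bvec T μ0 := by
  funext row
  obtain ⟨t, s⟩ := row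
  by_cases ht : (t : ℕ) < T
  · rw [mulVec_AL_lt p L _ t ht s]
    have h1 : ∀ a : A, toVec T (psi μ0 p π L) (⟨(t : ℕ) + 1, by omega⟩, s, a)
        = psi μ0 p π L ((t : ℕ) + 1) (s, a) := fun a => rfl
    have h2 : ∑ a : A, psi μ0 p π L ((t : ℕ) + 1) (s, a)
        = psiM μ0 p π L ((t : ℕ) + 1) s := sum_psi_eq hπ _ s
    simp only [h1, h2]
    have : psiM μ0 p π L ((t : ℕ) + 1) s
        = ∑ sa : S × A, p (t : ℕ) sa.1 sa.2 (L (t : ℕ)) s * psi μ0 p π L (t : ℕ) sa := rfl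
    rw [this]
    have hb : bvec T μ0 (t, s) = 0 := by
      have hne : (t : ℕ) ≠ T := by omega
      simp [bvec, hne]
    rw [hb, sub_eq_zero]
    rfl
  · rw [mulVec_AL_last p L _ t ht s]
    have h1 : ∀ a : A, toVec T (psi μ0 p π L) (⟨0, Nat.succ_pos T⟩, s, a)
        = psi μ0 p π L 0 (s, a) := fun a => rfl
    simp only [h1, sum_psi_eq hπ 0 s]
    have htT : (t : ℕ) = T := by omega
    have hb : bvec T μ0 (t, s) = μ0 s := if_pos htT
    rw [hb]
    rfl

lemma dot_eq_sum {T : ℕ} (φ : ℕ → S × A → ℝ) (d : Fin (T + 1) × S × A → ℝ) :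
    dot (fun x : Fin (T + 1) × S × A => φ (x.1 : ℕ) x.2) d
      = ∑ t ∈ Finset.range (T + 1), ∑ sa : S × A, φ t sa * toFam T d t sa := by
  rw [dot, Fintype.sum_prod_type, Finset.sum_range (fun t => ∑ sa : S × A, φ t sa * toFam T d t sa)]
  apply Finset.sum_congr rfl
  intro t _
  apply Finset.sum_congr rfl
  intro sa _
  rw [toFam_coe]

lemma dot_rLvec {T : ℕ} (r : ℕ → S → A → (S × A → ℝ) → ℝ) (L : ℕ → S × A → ℝ)
    (d : Fin (T + 1) × S × A → ℝ) :
    dot (rLvec T r L) d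
      = ∑ t ∈ Finset.range (T + 1), ∑ sa : S × A, r t sa.1 sa.2 (L t) * toFam T d t sa :=
  dot_eq_sum (fun t sa => r t sa.1 sa.2 (L t)) d

lemma dot_cLmat {T k : ℕ} (c : ℕ → S → A → (S × A → ℝ) → Fin k → ℝ)
    (L : ℕ → S × A → ℝ) (i : Fin k) (d : Fin (T + 1) × S × A → ℝ) :
    dot (cLmat T k c L i) d
      = ∑ t ∈ Finset.range (T + 1), ∑ sa : S × A, c t sa.1 sa.2 (L t) i * toFam T d t sa :=
  dot_eq_sum (fun t sa => c t sa.1 sa.2 (L t) i) d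

lemma V_eq_dot {T : ℕ} (μ0 : S → ℝ) (p : ℕ → S → A → (S × A → ℝ) → S → ℝ)
    (r : ℕ → S → A → (S × A → ℝ) → ℝ) (π : ℕ → S → A → ℝ) (L : ℕ → S × A → ℝ) :
    V T μ0 p r π L = dot (rLvec T r L) (toVec T (psi μ0 p π L)) := by
  rw [dot_rLvec, V]
  refine Finset.sum_congr rfl fun t ht => Finset.sum_congr rfl fun sa _ => ?_
  rw [toFam_toVec _ _ (Finset.mem_range.mp ht)]

lemma Cost_eq_dot {T k : ℕ} (μ0 : S → ℝ) (p : ℕ → S → A → (S × A → ℝ) → S → ℝ)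
    (c : ℕ → S → A → (S × A → ℝ) → Fin k → ℝ) (π : ℕ → S → A → ℝ) (L : ℕ → S × A → ℝ)
    (i : Fin k) :
    Cost T k μ0 p c π L i = dot (cLmat T k c L i) (toVec T (psi μ0 p π L)) := by
  rw [dot_cLmat, Cost]
  refine Finset.sum_congr rfl fun t ht => Finset.sum_congr rfl fun sa _ => ?_
  rw [toFam_toVec _ _ (Finset.mem_range.mp ht)]

lemma lp_feasible_of_policy [DecidableEq S] {T k : ℕ} {μ0 : S → ℝ}
    {p : ℕ → S → A → (S × A → ℝ) → S → ℝ} {c : ℕ → S → A → (S × A → ℝ) → Fin k → ℝ}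
    {γ0 : Fin k → ℝ} {π : ℕ → S → A → ℝ} {L : ℕ → S × A → ℝ}
    (hμ0 : IsSimplex μ0) (hp : IsKernel T p) (hL : IsFlow L) (hπ : IsPolicy π)
    (hc : ∀ i, Cost T k μ0 p c π L i ≤ γ0 i) :
    LPFeasible T k μ0 p c γ0 L (toVec T (psi μ0 p π L)) := by
  refine ⟨psi_constraint hπ, fun i => ?_, fun x => ?_⟩
  · rw [← Cost_eq_dot]; exact hc i
  · exact psi_nonneg hμ0 hp hL hπ _ (Nat.lt_succ_iff.mp x.1.isLt) _

lemma ratio_mul {T : ℕ} {d : Fin (T + 1) × S × A → ℝ} {π : ℕ → S → A → ℝ}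
    (hd : ∀ x, 0 ≤ d x) (hπ : InPi T (toFam T d) π) (t : ℕ) (ht : t ≤ T) (s : S) (a : A) :
    π t s a * (∑ a' : A, toFam T d t (s, a')) = toFam T d t (s, a) := by
  have hnn : ∀ a' : A, 0 ≤ toFam T d t (s, a') := fun a' => toFam_nonneg hd t (s, a')
  rcases lt_or_eq_of_le (Finset.sum_nonneg fun a' _ => hnn a') with hpos | hzero
  · rw [hπ.2 t ht s a hpos, div_mul_cancel₀ _ hpos.ne']
  · have : toFam T d t (s, a) = 0 := by
      have := (Finset.sum_eq_zero_iff_of_nonneg (fun a' _ => hnn a')).mp hzero.symm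
      exact this a (Finset.mem_univ a)
    rw [← hzero, this, mul_zero]

lemma flow_eq [DecidableEq S] {T : ℕ} {μ0 : S → ℝ}
    {p : ℕ → S → A → (S × A → ℝ) → S → ℝ} {π : ℕ → S → A → ℝ}
    {L : ℕ → S × A → ℝ} {d : Fin (T + 1) × S × A → ℝ}
    (hd : ∀ x, 0 ≤ d x) (hA : mulVec (ALmat T p L) d = bvec T μ0)
    (hπ : InPi T (toFam T d) π) :
    ∀ t ≤ T, ∀ sa : S × A, psi μ0 p π L t sa = toFam T d t sa := by
  intro t
  induction t with
  | zero =>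
    intro _ sa
    obtain ⟨s, a⟩ := sa
    have hrow := congrFun hA (⟨T, Nat.lt_succ_self T⟩, s)
    rw [mulVec_AL_last p L d _ (by simp) s] at hrow
    have hb : bvec T μ0 ((⟨T, Nat.lt_succ_self T⟩ : Fin (T + 1)), s) = μ0 s := if_pos rfl
    rw [hb] at hrow
    have hsum : ∑ a' : A, toFam T d 0 (s, a') = μ0 s := by
      rw [← hrow]
      exact Finset.sum_congr rfl fun a' _ => toFam_lt d 0 (Nat.succ_pos T) (s, a')
    have := ratio_mul hd hπ 0 (Nat.zero_le T) s a
    rw [hsum] at this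
    rw [show psi μ0 p π L 0 (s, a) = π 0 s a * μ0 s from rfl, this]
  | succ t ih =>
    intro ht sa
    obtain ⟨s, a⟩ := sa
    have ht' : t ≤ T := Nat.le_of_succ_le ht
    have htT : t < T := ht
    have htlt : t < T + 1 := by omega
    have hrow := congrFun hA (⟨t, htlt⟩, s)
    rw [mulVec_AL_lt p L d ⟨t, htlt⟩ htT s] at hrow
    have hb : bvec T μ0 ((⟨t, htlt⟩ : Fin (T + 1)), s) = 0 := by
      have hne : t ≠ T := by omega
      simp [bvec, hne]
    rw [hb, sub_eq_zero] at hrow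
    have hstep : ∑ sa' : S × A, p t sa'.1 sa'.2 (L t) s * psi μ0 p π L t sa'
        = ∑ a' : A, toFam T d (t + 1) (s, a') := by
      calc ∑ sa' : S × A, p t sa'.1 sa'.2 (L t) s * psi μ0 p π L t sa'
          = ∑ sa' : S × A, p t sa'.1 sa'.2 (L t) s * d (⟨t, htlt⟩, sa') := by
            refine Finset.sum_congr rfl fun sa' _ => ?_
            rw [ih ht' sa', toFam_lt d t htlt sa']
        _ = ∑ a' : A, d (⟨t + 1, by omega⟩, s, a') := hrow
        _ = ∑ a' : A, toFam T d (t + 1) (s, a') := by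
            refine Finset.sum_congr rfl fun a' _ => ?_
            rw [toFam_lt d (t + 1) (by omega) (s, a')]
    have hkey := ratio_mul hd hπ (t + 1) ht s a
    calc psi μ0 p π L (t + 1) (s, a)
        = π (t + 1) s a * ∑ sa' : S × A, p t sa'.1 sa'.2 (L t) s * psi μ0 p π L t sa' := rfl
      _ = π (t + 1) s a * ∑ a' : A, toFam T d (t + 1) (s, a') := by rw [hstep]
      _ = toFam T d (t + 1) (s, a) := hkey

noncomputable def mkPolicy (d : ℕ → S × A → ℝ) : ℕ → S → A → ℝ := fun t s a =>
  if 0 < ∑ a' : A, d t (s, a') then d t (s, a) / ∑ a' : A, d t (s, a')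
  else (Fintype.card A : ℝ)⁻¹

lemma mkPolicy_isPolicy [Nonempty A] {d : ℕ → S × A → ℝ} (hd : ∀ t sa, 0 ≤ d t sa) :
    IsPolicy (mkPolicy d) := by
  intro t s
  by_cases h : 0 < ∑ a' : A, d t (s, a')
  · constructor
    · intro a
      simp only [mkPolicy, if_pos h]
      exact div_nonneg (hd t (s, a)) h.le
    · simp only [mkPolicy, if_pos h, ← Finset.sum_div]
      exact div_self h.ne'
  · constructor
    · intro a
      simp only [mkPolicy, if_neg h]
      positivity
    · simp only [mkPolicy, if_neg h, Finset.sum_const, Finset.card_univ, nsmul_eq_mul]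
      rw [mul_inv_cancel₀]
      exact_mod_cast Fintype.card_ne_zero

lemma mkPolicy_inPi [Nonempty A] {T : ℕ} {d : ℕ → S × A → ℝ} (hd : ∀ t sa, 0 ≤ d t sa) :
    InPi T d (mkPolicy d) :=
  ⟨mkPolicy_isPolicy hd, fun t _ s a h => if_pos h⟩

lemma dot_eq_V_of_flow {T : ℕ} {μ0 : S → ℝ} {p : ℕ → S → A → (S × A → ℝ) → S → ℝ}
    {r : ℕ → S → A → (S × A → ℝ) → ℝ} {π : ℕ → S → A → ℝ} {L : ℕ → S × A → ℝ}
    {d : Fin (T + 1) × S × A → ℝ}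
    (hflow : ∀ t ≤ T, ∀ sa : S × A, psi μ0 p π L t sa = toFam T d t sa) :
    dot (rLvec T r L) d = V T μ0 p r π L := by
  rw [dot_rLvec, V]
  refine Finset.sum_congr rfl fun t ht => Finset.sum_congr rfl fun sa _ => ?_
  rw [hflow t (Nat.lt_succ_iff.mp (Finset.mem_range.mp ht)) sa]

lemma dot_eq_Cost_of_flow {T k : ℕ} {μ0 : S → ℝ} {p : ℕ → S → A → (S × A → ℝ) → S → ℝ}
    {c : ℕ → S → A → (S × A → ℝ) → Fin k → ℝ} {π : ℕ → S → A → ℝ} {L : ℕ → S × A → ℝ}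
    {d : Fin (T + 1) × S × A → ℝ}
    (hflow : ∀ t ≤ T, ∀ sa : S × A, psi μ0 p π L t sa = toFam T d t sa) (i : Fin k) :
    dot (cLmat T k c L i) d = Cost T k μ0 p c π L i := by
  rw [dot_cLmat, Cost]
  refine Finset.sum_congr rfl fun t ht => Finset.sum_congr rfl fun sa _ => ?_
  rw [hflow t (Nat.lt_succ_iff.mp (Finset.mem_range.mp ht)) sa]

end AuxLemmas


/-- Lemma 3.1 (CMDPs as LPs): for a fixed mean-field flow `L`, optimal policies of
`CMDP(L)` correspond exactly to optimal solutions of the linear program `LP(L)`. -/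
theorem cmdp_lp_equivalence {S A : Type*} [Fintype S] [Fintype A] [DecidableEq S]
    [Nonempty S] [Nonempty A]
    (T k : ℕ) (μ0 : S → ℝ) (hμ0 : IsSimplex μ0)
    (p : ℕ → S → A → (S × A → ℝ) → S → ℝ) (hp : IsKernel T p)
    (r : ℕ → S → A → (S × A → ℝ) → ℝ)
    (c : ℕ → S → A → (S × A → ℝ) → Fin k → ℝ) (γ0 : Fin k → ℝ)
    (L : ℕ → S × A → ℝ) (hL : IsFlow L) :
    (∀ π, IsCMDPOptimal T k μ0 p r c γ0 π L →
        LPOptimal T k μ0 p r c γ0 L (toVec T (psi μ0 p π L)) ∧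
        InPi T (psi μ0 p π L) π) ∧
    (∀ d, LPOptimal T k μ0 p r c γ0 L d →
        ∀ π, InPi T (toFam T d) π → IsCMDPOptimal T k μ0 p r c γ0 π L) := by
  constructor
  · intro π hopt
    obtain ⟨hπ, hcost, hmax⟩ := hopt
    refine ⟨⟨lp_feasible_of_policy hμ0 hp hL hπ hcost, ?_⟩, inPi_psi hπ⟩
    intro d' hfeas'
    obtain ⟨hA', hc', hd'⟩ := hfeas'
    have hdf : ∀ t sa, 0 ≤ toFam T d' t sa := fun t sa => toFam_nonneg hd' t sa
    have hin : InPi T (toFam T d') (mkPolicy (toFam T d')) := mkPolicy_inPi hdf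
    have hflow := flow_eq hd' hA' hin
    rw [dot_eq_V_of_flow hflow, ← V_eq_dot]
    refine hmax _ hin.1 fun i => ?_
    rw [← dot_eq_Cost_of_flow hflow i]
    exact hc' i
  · intro d hdopt π hin
    obtain ⟨⟨hA, hc, hd0⟩, hmax⟩ := hdopt
    have hπ := hin.1
    have hflow := flow_eq hd0 hA hin
    refine ⟨hπ, fun i => ?_, ?_⟩
    · rw [← dot_eq_Cost_of_flow hflow i]; exact hc i
    · intro π' hπ' hc'
      have hle := hmax _ (lp_feasible_of_policy hμ0 hp hL hπ' hc')
      rw [← V_eq_dot] at hle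
      rwa [dot_eq_V_of_flow hflow] at hle


end CMFG
end
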